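/- arXiv:1406.2449 — 7 statements merged into one kernel-verified Lean document; each statement's English description precedes it below -/
import Mathlib

section
/- Let k, a be positive integers and n a natural number. Then (k+1)·|SP^U_n(k,a)| = |SP_n(k,a)| − δ_{a|n}; that is, the number of super (k,a)-paths of order n whose first non-horizontal step is an up step equals (|SP_n(k,a)| − δ_{a|n})/(k+1). -/
/-- Steps for `(k,a)`-paths: up `U = (1,k)`, down `D = (1,-1)`, horizontal `H = (a,0)`. -/
inductive Step : Type
  | U : Step
  | D : Step
  | H : Step
  deriving DecidableEq

/-- The displacement of a single step. -/
def stepDisp (k a : ℕ) : Step → ℤ × ℤ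
  | Step.U => (1, (k : ℤ))
  | Step.D => (1, -1)
  | Step.H => ((a : ℤ), 0)

/-- The total displacement of a word of steps. -/
def pathDisp (k a : ℕ) (w : List Step) : ℤ × ℤ := (w.map (stepDisp k a)).sum

/-- A super `(k,a)`-path of order `n`: a step word with total displacement `(n,0)`. -/
def IsSuperPath (k a n : ℕ) (w : List Step) : Prop :=
  pathDisp k a w = ((n : ℤ), 0)

/-- The first letter different from `H` exists and is `U`. -/
def FirstNonHIsU (w : List Step) : Prop :=
  ∃ (l : ℕ) (r : List Step), w = List.replicate l Step.H ++ Step.U :: r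

/-!
Fix the number `u` of up steps; a super path with `u` up steps has exactly `k * u` down steps,
and being a super path depends only on the multiset of letters. Swapping the first non-`H` letter
with a marked occurrence of the other non-`H` letter matches words led by `U` with a marked `D`
to words led by `D` with a marked `U`, so `(#led by U) * (k * u) = (#led by D) * u`. Hence for
`u > 0` there are `k` times as many super paths led by `D` as led by `U`. The super paths with no
`U` consist of `H` steps only, and there is one of them exactly when `a ∣ n`.
-/

open List

section FirstNonBlank

variable {α : Type*} {b x y : α}

def FirstNonBlankIs (b x : α) (w : List α) : Prop :=
  ∃ (l : ℕ) (r : List α), w = replicate l b ++ x :: r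

theorem replicate_append_cons_inj (hx : x ≠ b) (hy : y ≠ b) {l l' : ℕ} {r r' : List α}
    (h : replicate l b ++ x :: r = replicate l' b ++ y :: r') : l = l' ∧ x = y ∧ r = r' := by
  induction l generalizing l' with
  | zero => cases l' <;> simp_all [replicate_succ, eq_comm]
  | succ m ih =>
    cases l' with
    | zero => simp_all [replicate_succ]
    | succ m' => simpa using ih (by simpa [replicate_succ] using h)

theorem FirstNonBlankIs.unique (hx : x ≠ b) (hy : y ≠ b) {w : List α}
    (h₁ : FirstNonBlankIs b x w) (h₂ : FirstNonBlankIs b y w) : x = y := by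
  obtain ⟨l, r, rfl⟩ := h₁
  obtain ⟨l', r', h⟩ := h₂
  exact (replicate_append_cons_inj hx hy h).2.1

theorem FirstNonBlankIs.mem {w : List α} (h : FirstNonBlankIs b x w) : x ∈ w := by
  obtain ⟨l, r, rfl⟩ := h
  simp

theorem forall_eq_or_exists_firstNonBlankIs (b : α) (w : List α) :
    (∀ s ∈ w, s = b) ∨ ∃ x ≠ b, FirstNonBlankIs b x w := by
  induction w with
  | nil => simp
  | cons s t ih =>
    by_cases hs : s = b
    · subst hs
      refine ih.imp (by simp_all) fun ⟨x, hx, l, r, h⟩ => ⟨x, hx, l + 1, r, ?_⟩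
      simp [h, replicate_succ]
    · exact Or.inr ⟨s, hs, 0, t, rfl⟩

theorem exists_append_cons_count_eq [DecidableEq α] (r : List α) {i : ℕ} (hi : i < r.count x) :
    ∃ r₁ r₂, r = r₁ ++ x :: r₂ ∧ r₁.count x = i := by
  induction r generalizing i with
  | nil => simp at hi
  | cons s t ih =>
    by_cases hs : s = x
    · subst hs
      cases i with
      | zero => exact ⟨[], t, by simp⟩
      | succ j =>
        obtain ⟨r₁, r₂, rfl, hr₁⟩ := ih (i := j) (by simpa using hi)
        exact ⟨s :: r₁, r₂, rfl, by simp [hr₁]⟩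
    · obtain ⟨r₁, r₂, rfl, hr₁⟩ := ih (i := i) (by simpa [count_cons, hs] using hi)
      exact ⟨s :: r₁, r₂, rfl, by simp [hs, hr₁]⟩

theorem append_cons_inj_of_count_eq [DecidableEq α] {r₁ r₂ s₁ s₂ : List α}
    (h : r₁ ++ x :: r₂ = s₁ ++ x :: s₂) (hc : r₁.count x = s₁.count x) :
    r₁ = s₁ ∧ r₂ = s₂ := by
  induction r₁ generalizing s₁ with
  | nil => cases s₁ <;> simp_all [eq_comm]
  | cons s t ih =>
    cases s₁ with
    | nil => simp_all
    | cons s' t' =>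
      simp only [cons_append, cons.injEq] at h
      obtain ⟨rfl, h⟩ := h
      obtain ⟨rfl, rfl⟩ := ih h (by simpa [count_cons] using hc)
      exact ⟨rfl, rfl⟩

def plantedWord (b x y : α) (t : ℕ × List α × List α) : List α :=
  replicate t.1 b ++ x :: (t.2.1 ++ y :: t.2.2)

theorem plantedWord_perm (b x y : α) (t : ℕ × List α × List α) :
    plantedWord b x y t ~ plantedWord b y x t :=
  .append_left _ <| (perm_middle.cons x).trans <|
    (Perm.swap y x _).trans (perm_middle.symm.cons y)

variable [DecidableEq α]

/-- Words of `S` whose first letter other than `b` is `x`, with a marked occurrence of `y`. -/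
def markedWords (b x y : α) (S : Set (List α)) : Set (List α × ℕ) :=
  {p | p.1 ∈ S ∧ FirstNonBlankIs b x p.1 ∧ p.2 < p.1.count y}

theorem count_replicate_append_cons (hy : y ≠ b) (hxy : x ≠ y) (l : ℕ) (r : List α) :
    (replicate l b ++ x :: r).count y = r.count y := by
  simp [count_replicate, hy.symm, count_cons_of_ne hxy]

theorem ncard_markedWords_eq (hx : x ≠ b) (hy : y ≠ b) (hxy : x ≠ y) (S : Set (List α)) :
    (markedWords b x y S).ncard = {t | plantedWord b x y t ∈ S}.ncard := by
  have hinj : Function.Injective fun t => (plantedWord b x y t, t.2.1.count y) := by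
    rintro ⟨l, r₁, r₂⟩ ⟨l', r₁', r₂'⟩ h
    simp only [plantedWord, Prod.mk.injEq] at h
    obtain ⟨rfl, -, h'⟩ := replicate_append_cons_inj hx hx h.1
    obtain ⟨rfl, rfl⟩ := append_cons_inj_of_count_eq h' h.2
    rfl
  rw [← Set.ncard_image_of_injective _ hinj]
  congr 1
  ext ⟨w, i⟩
  constructor
  · rintro ⟨hw, ⟨l, r, rfl⟩, hi⟩
    obtain ⟨r₁, r₂, rfl, rfl⟩ :=
      exists_append_cons_count_eq r (by rwa [count_replicate_append_cons hy hxy] at hi)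
    exact ⟨(l, r₁, r₂), hw, rfl⟩
  · rintro ⟨⟨l, r₁, r₂⟩, ht, h⟩
    obtain ⟨rfl, rfl⟩ := Prod.mk.inj h
    exact ⟨ht, ⟨l, _, rfl⟩, by simp [plantedWord, count_replicate_append_cons hy hxy]⟩

theorem ncard_markedWords_comm (hx : x ≠ b) (hy : y ≠ b) (hxy : x ≠ y) {S : Set (List α)}
    (hS : ∀ {w w'}, w ~ w' → w ∈ S → w' ∈ S) :
    (markedWords b x y S).ncard = (markedWords b y x S).ncard := by
  rw [ncard_markedWords_eq hx hy hxy, ncard_markedWords_eq hy hx hxy.symm]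
  congr 1
  ext t
  exact ⟨hS (plantedWord_perm b x y t), hS (plantedWord_perm b y x t)⟩

theorem markedWords_eq_prod {S : Set (List α)} {q : ℕ} (hSy : ∀ w ∈ S, w.count y = q) :
    markedWords b x y S = {w ∈ S | FirstNonBlankIs b x w} ×ˢ Set.Iio q := by
  ext ⟨w, i⟩
  simp only [markedWords, Set.mem_prod, Set.mem_Iio]
  constructor
  · rintro ⟨hw, hx, hi⟩
    exact ⟨⟨hw, hx⟩, hSy w hw ▸ hi⟩
  · rintro ⟨⟨hw, hx⟩, hi⟩
    exact ⟨hw, hx, (hSy w hw).symm ▸ hi⟩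

theorem ncard_firstNonBlankIs_mul_eq (hx : x ≠ b) (hy : y ≠ b) (hxy : x ≠ y)
    {S : Set (List α)} (hS : ∀ {w w'}, w ~ w' → w ∈ S → w' ∈ S) {p q : ℕ}
    (hSx : ∀ w ∈ S, w.count x = p) (hSy : ∀ w ∈ S, w.count y = q) :
    {w ∈ S | FirstNonBlankIs b x w}.ncard * q = {w ∈ S | FirstNonBlankIs b y w}.ncard * p := by
  have h := ncard_markedWords_comm hx hy hxy hS
  rwa [markedWords_eq_prod hSy, markedWords_eq_prod hSx, Set.ncard_prod, Set.ncard_prod,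
    Set.ncard_Iio_nat, Set.ncard_Iio_nat] at h

end FirstNonBlank

theorem Set.ncard_eq_sum_ncard_fiber {β : Type*} {s : Set β} (hs : s.Finite) {f : β → ℕ} {N : ℕ}
    (hf : ∀ x ∈ s, f x < N) : s.ncard = ∑ u ∈ Finset.range N, {x ∈ s | f x = u}.ncard := by
  classical
  rw [Set.ncard_eq_toFinset_card _ hs, Finset.card_eq_sum_card_fiberwise (t := Finset.range N)
    fun x hx => by simpa using hf x (by simpa using hx)]
  refine Finset.sum_congr rfl fun u _ => ?_
  rw [← Set.ncard_coe_finset]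
  congr 1
  ext x
  simp

instance : Finite Step :=
  Finite.of_injective (fun s => match s with | .U => (0 : Fin 3) | .D => 1 | .H => 2)
    (by intro s t; cases s <;> cases t <;> simp)

section SuperPath

variable {k a n : ℕ}

theorem List.Perm.isSuperPath {w w' : List Step} (h : w ~ w') :
    IsSuperPath k a n w ↔ IsSuperPath k a n w' := by
  rw [IsSuperPath, IsSuperPath, pathDisp, pathDisp, (h.map _).sum_eq]

theorem pathDisp_eq_count (k a : ℕ) (w : List Step) :
    pathDisp k a w = (((w.count .U + w.count .D + a * w.count .H : ℕ) : ℤ),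
      (k : ℤ) * w.count .U - w.count .D) := by
  induction w with
  | nil => rfl
  | cons s t ih =>
    simp only [pathDisp, map_cons, sum_cons] at ih ⊢
    rw [ih]
    refine Prod.ext ?_ ?_ <;> cases s <;> simp [stepDisp] <;> ring

theorem isSuperPath_iff_count {w : List Step} :
    IsSuperPath k a n w ↔
      w.count .U + w.count .D + a * w.count .H = n ∧ w.count .D = k * w.count .U := by
  rw [IsSuperPath, pathDisp_eq_count, Prod.ext_iff]
  constructor <;> rintro ⟨h₁, h₂⟩ <;> constructor <;> simp only at * <;> omega

theorem length_eq_count (w : List Step) : w.length = w.count .U + w.count .D + w.count .H := by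
  induction w with
  | nil => rfl
  | cons s t ih => cases s <;> simp [ih] <;> omega

theorem IsSuperPath.length_le (ha : 0 < a) {w : List Step} (h : IsSuperPath k a n w) :
    w.length ≤ n := by
  have := Nat.le_mul_of_pos_left (w.count .H) ha
  rw [isSuperPath_iff_count] at h
  rw [length_eq_count]
  omega

theorem finite_setOf_isSuperPath (ha : 0 < a) : {w | IsSuperPath k a n w}.Finite :=
  (finite_length_le Step n).subset fun _ => IsSuperPath.length_le ha

theorem isSuperPath_replicate_H {m : ℕ} : IsSuperPath k a n (replicate m .H) ↔ a * m = n := by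
  simp [isSuperPath_iff_count, count_replicate]

theorem ncard_setOf_isSuperPath_forall_eq_H (ha : 0 < a) :
    {w | IsSuperPath k a n w ∧ ∀ s ∈ w, s = .H}.ncard = if a ∣ n then 1 else 0 := by
  have himage : {w | IsSuperPath k a n w ∧ ∀ s ∈ w, s = .H} =
      (replicate · Step.H) '' {m | a * m = n} := by
    ext w
    constructor
    · rintro ⟨hw, hH⟩
      rw [eq_replicate_iff.2 ⟨rfl, hH⟩, isSuperPath_replicate_H] at hw
      exact ⟨w.length, hw, (eq_replicate_iff.2 ⟨rfl, hH⟩).symm⟩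
    · rintro ⟨m, hm, rfl⟩
      exact ⟨isSuperPath_replicate_H.2 hm, fun s => eq_of_mem_replicate⟩
  rw [himage, Set.ncard_image_of_injective _ (replicate_left_injective _)]
  split_ifs with hdvd
  · obtain ⟨m, rfl⟩ := hdvd
    rw [show {m' | a * m' = a * m} = {m} by ext; simp [ha.ne']]
    exact Set.ncard_singleton m
  · rw [show {m | a * m = n} = ∅ by ext m; exact iff_of_false (fun h => hdvd ⟨m, h.symm⟩) id]
    exact Set.ncard_empty _

theorem ncard_setOf_isSuperPath_eq (ha : 0 < a) :
    {w | IsSuperPath k a n w}.ncard = (if a ∣ n then 1 else 0) +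
      {w | IsSuperPath k a n w ∧ FirstNonBlankIs .H .U w}.ncard +
      {w | IsSuperPath k a n w ∧ FirstNonBlankIs .H .D w}.ncard := by
  have hfin := finite_setOf_isSuperPath (k := k) (n := n) ha
  have hsplit : {w | IsSuperPath k a n w} =
      ({w | IsSuperPath k a n w ∧ ∀ s ∈ w, s = .H} ∪
        {w | IsSuperPath k a n w ∧ FirstNonBlankIs .H .U w}) ∪
        {w | IsSuperPath k a n w ∧ FirstNonBlankIs .H .D w} := by
    ext w
    simp only [Set.mem_union, Set.mem_ofPred_eq, ← and_or_left, iff_self_and]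
    intro _
    rcases forall_eq_or_exists_firstNonBlankIs Step.H w with h | ⟨x, hx, h⟩
    · exact .inl (.inl h)
    · cases x <;> simp_all
  have hblank : ∀ {x}, x ≠ Step.H →
      Disjoint {w | IsSuperPath k a n w ∧ ∀ s ∈ w, s = .H}
        {w | IsSuperPath k a n w ∧ FirstNonBlankIs .H x w} :=
    fun hx => Set.disjoint_left.2 fun _ ⟨_, hH⟩ ⟨_, h⟩ => hx (hH _ h.mem)
  have hUD : Disjoint {w | IsSuperPath k a n w ∧ FirstNonBlankIs .H .U w}
      {w | IsSuperPath k a n w ∧ FirstNonBlankIs .H .D w} :=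
    Set.disjoint_left.2 fun _ ⟨_, hU⟩ ⟨_, hD⟩ =>
      absurd (hU.unique (by decide) (by decide) hD) (by decide)
  have hfin' : ∀ {P : List Step → Prop}, {w | IsSuperPath k a n w ∧ P w}.Finite :=
    hfin.subset fun _ h => h.1
  rw [hsplit, Set.ncard_union_eq (Set.disjoint_union_left.2 ⟨hblank (by decide), hUD⟩)
      (hfin'.union hfin') hfin', Set.ncard_union_eq (hblank (by decide)) hfin' hfin',
    ncard_setOf_isSuperPath_forall_eq_H ha]

theorem ncard_fiber_firstNonH_D_eq_mul (u : ℕ) :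
    {w ∈ {w | IsSuperPath k a n w ∧ w.count .U = u} | FirstNonBlankIs .H .D w}.ncard =
      k * {w ∈ {w | IsSuperPath k a n w ∧ w.count .U = u} | FirstNonBlankIs .H .U w}.ncard := by
  rcases Nat.eq_zero_or_pos u with rfl | hu
  · have hD : {w ∈ {w | IsSuperPath k a n w ∧ w.count .U = 0} | FirstNonBlankIs .H .D w} = ∅ := by
      refine Set.eq_empty_of_forall_notMem fun w ⟨⟨hw, hU⟩, hD⟩ => ?_
      have := count_pos_iff.2 hD.mem
      rw [(isSuperPath_iff_count.1 hw).2, hU] at this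
      simp at this
    have hU : {w ∈ {w | IsSuperPath k a n w ∧ w.count .U = 0} | FirstNonBlankIs .H .U w} = ∅ :=
      Set.eq_empty_of_forall_notMem fun w ⟨⟨_, hU⟩, hw⟩ => (count_pos_iff.2 hw.mem).ne' hU
    rw [hD, hU]
    simp
  · refine Nat.eq_of_mul_eq_mul_right hu ?_
    rw [mul_comm k, mul_assoc]
    refine (ncard_firstNonBlankIs_mul_eq (by decide) (by decide) (by decide) ?_
      (fun w hw => hw.2) (fun w hw => ?_)).symm
    · exact fun h ⟨hw, hU⟩ => ⟨h.isSuperPath.1 hw, h.count_eq _ ▸ hU⟩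
    · rw [(isSuperPath_iff_count.1 hw.1).2, hw.2]

theorem ncard_firstNonH_D_eq_mul (ha : 0 < a) :
    {w | IsSuperPath k a n w ∧ FirstNonBlankIs .H .D w}.ncard =
      k * {w | IsSuperPath k a n w ∧ FirstNonBlankIs .H .U w}.ncard := by
  have hfin := finite_setOf_isSuperPath (k := k) (n := n) ha
  have hcount : ∀ w ∈ {w | IsSuperPath k a n w}, w.count .U < n + 1 :=
    fun w hw => Nat.lt_succ_of_le (count_le_length.trans (hw.length_le ha))
  rw [Set.ncard_eq_sum_ncard_fiber (hfin.subset fun _ h => h.1) fun w hw => hcount w hw.1,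
    Set.ncard_eq_sum_ncard_fiber (hfin.subset fun _ h => h.1) fun w hw => hcount w hw.1,
    Finset.mul_sum]
  refine Finset.sum_congr rfl fun u _ => ?_
  have hsep : ∀ x : Step,
      {w ∈ {w | IsSuperPath k a n w ∧ FirstNonBlankIs .H x w} | w.count .U = u} =
        {w ∈ {w | IsSuperPath k a n w ∧ w.count .U = u} | FirstNonBlankIs .H x w} :=
    fun _ => Set.ext fun _ => and_right_comm
  rw [hsep, hsep]
  exact ncard_fiber_firstNonH_D_eq_mul u

end SuperPath

theorem stmt0_general (k a n : ℕ) (ha : 0 < a) :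
    (k + 1) * {w : List Step | IsSuperPath k a n w ∧ FirstNonHIsU w}.ncard =
      {w : List Step | IsSuperPath k a n w}.ncard - (if a ∣ n then 1 else 0) := by
  change (k + 1) * {w | IsSuperPath k a n w ∧ FirstNonBlankIs .H .U w}.ncard = _
  rw [ncard_setOf_isSuperPath_eq ha, ncard_firstNonH_D_eq_mul ha, add_assoc,
    Nat.add_sub_cancel_left]
  ring

/-- `(k+1)·|SP^U_n(k,a)| = |SP_n(k,a)| − δ_{a∣n}`. -/
theorem stmt0 (k a n : ℕ) (hk : 0 < k) (ha : 0 < a) :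
    (k + 1) * {w : List Step | IsSuperPath k a n w ∧ FirstNonHIsU w}.ncard =
      {w : List Step | IsSuperPath k a n w}.ncard - (if a ∣ n then 1 else 0) :=
  stmt0_general k a n ha
end

section
/- Let k, a be positive integers and n a natural number. The number of ordered pairs (L, p), where L is a (k,a)-path of order n and p is a hump of L, equals the number of super (k,a)-paths of order n whose first non-horizontal step is an up step; equivalently, the total number of humps over all paths in P_n(k,a) equals |SP^U_n(k,a)|. -/
/-- A `(k,a)`-path of order `n`: a super path all of whose partial sums have
nonnegative `y`-coordinate. -/
def IsPath (k a n : ℕ) (w : List Step) : Prop :=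
  IsSuperPath k a n w ∧ ∀ p : List Step, p <+: w → 0 ≤ (pathDisp k a p).2

/-- There is a hump (a factor `U H^j D` for some `j ≥ 0`) starting at position `i` of `w`. -/
def IsHumpAt (w : List Step) (i : ℕ) : Prop :=
  ∃ j : ℕ, (Step.U :: (List.replicate j Step.H ++ [Step.D])) <+: w.drop i

lemma replicate_append_cons_inj_s1 {α : Type*} {b x : α} (hx : x ≠ b) {j j' : ℕ} {v v' : List α}
    (h : List.replicate j b ++ x :: v = List.replicate j' b ++ x :: v') : j = j' ∧ v = v' := by
  induction j generalizing j' with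
  | zero => cases j' <;> simp_all [List.replicate_succ, eq_comm]
  | succ j ih => cases j' <;> simp_all [List.replicate_succ]

namespace WeightedList

variable {α : Type*} (f : α → ℤ)

def height (w : List α) : ℤ := (w.map f).sum

def PrefixesGE (c : ℤ) (w : List α) : Prop := ∀ p, p <+: w → c ≤ height f p

def PosPrefixes (w : List α) : Prop := ∀ p, p <+: w → p ≠ [] → 0 < height f p

variable {f} {c c' : ℤ} {x x' : α} {a u u' v v' w : List α}

@[simp] lemma height_nil : height f [] = 0 := rfl

@[simp] lemma height_cons : height f (x :: w) = f x + height f w := by simp [height]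

@[simp] lemma height_append : height f (u ++ v) = height f u + height f v := by simp [height]

lemma PrefixesGE.nonpos (h : PrefixesGE f c w) : c ≤ 0 := h [] w.nil_prefix

lemma PrefixesGE.le_height (h : PrefixesGE f c w) : c ≤ height f w := h w w.prefix_refl

lemma PrefixesGE.mono (h : PrefixesGE f c w) (hc : c' ≤ c) : PrefixesGE f c' w :=
  fun p hp => hc.trans (h p hp)

lemma PrefixesGE.of_prefix (h : PrefixesGE f c w) (hu : u <+: w) : PrefixesGE f c u :=
  fun p hp => h p (hp.trans hu)

@[simp] lemma prefixesGE_nil : PrefixesGE f c [] ↔ c ≤ 0 := by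
  simp [PrefixesGE]

@[simp] lemma prefixesGE_cons :
    PrefixesGE f c (x :: w) ↔ c ≤ 0 ∧ PrefixesGE f (c - f x) w := by
  simp only [PrefixesGE, List.prefix_cons_iff, forall_eq_or_imp, height_nil]
  refine and_congr_right fun _ => ⟨fun h p hp => ?_, fun h _ ⟨p, hpx, hp⟩ => ?_⟩
  · linarith [h _ ⟨p, rfl, hp⟩, height_cons (f := f) (x := x) (w := p)]
  · subst hpx
    linarith [h p hp, height_cons (f := f) (x := x) (w := p)]

@[simp] lemma prefixesGE_append :
    PrefixesGE f c (u ++ v) ↔ PrefixesGE f c u ∧ PrefixesGE f (c - height f u) v := by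
  induction u generalizing c with
  | nil => simpa using fun h => h.nonpos
  | cons y u ih => simp [ih, sub_sub, and_assoc]

lemma posPrefixes_cons : PosPrefixes f (x :: w) ↔ PrefixesGE f (1 - f x) w := by
  refine ⟨fun h p hp => ?_, fun h p hp hne => ?_⟩
  · have := h (x :: p) (List.cons_prefix_cons.2 ⟨rfl, hp⟩) (List.cons_ne_nil _ _)
    rw [height_cons] at this
    linarith
  · obtain rfl | ⟨q, rfl, hq⟩ := List.prefix_cons_iff.1 hp
    · exact absurd rfl hne
    · rw [height_cons]
      linarith [h q hq]

lemma PosPrefixes.prefixesGE_zero (h : PosPrefixes f w) : PrefixesGE f 0 w := by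
  intro p hp
  rcases eq_or_ne p [] with rfl | hne
  · rfl
  · exact (h p hp hne).le

lemma exists_append_cons_of_height_lt (hc : c ≤ 0) (h : height f w < c) :
    ∃ u x v, w = u ++ x :: v ∧ PrefixesGE f c u ∧ height f u + f x < c := by
  induction w generalizing c with
  | nil => exact absurd (h.trans_le hc) (lt_irrefl 0)
  | cons y w ih =>
    by_cases hy : f y < c
    · exact ⟨[], y, w, rfl, prefixesGE_nil.2 hc, by simpa using hy⟩
    · rw [height_cons] at h
      obtain ⟨u, x, v, rfl, hu, hx⟩ := ih (c := c - f y) (by linarith) (by linarith)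
      exact ⟨y :: u, x, v, rfl, prefixesGE_cons.2 ⟨hc, hu⟩, by rw [height_cons]; linarith⟩

lemma exists_append_prefixesGE_height_posPrefixes (w : List α) :
    ∃ u v, w = u ++ v ∧ PrefixesGE f (height f u) u ∧ PosPrefixes f v := by
  induction w with
  | nil => exact ⟨[], [], rfl, by simp, fun p hp hne => absurd (List.prefix_nil.1 hp) hne⟩
  | cons x w ih =>
    obtain ⟨u, v, rfl, hu, hv⟩ := ih
    by_cases hx : f x + height f u ≤ 0
    · exact ⟨x :: u, v, rfl, by simpa [hx] using hu, hv⟩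
    · refine ⟨[], x :: (u ++ v), rfl, by simp, ?_⟩
      rw [posPrefixes_cons, prefixesGE_append]
      exact ⟨hu.mono (by linarith), hv.prefixesGE_zero.mono (by linarith)⟩

lemma eq_nil_of_prefixesGE_of_height_add_lt (hua : PrefixesGE f c (u ++ a))
    (hx : height f u + f x < c) (h : x :: v = a ++ w) : a = [] := by
  obtain _ | ⟨y, a⟩ := a
  · rfl
  · obtain ⟨rfl, -⟩ := List.cons.inj h
    have := hua (u ++ [x]) (by simp)
    simp only [height_append, height_cons, height_nil, add_zero] at this
    linarith

lemma append_cons_inj_of_prefixesGE (h : u ++ x :: v = u' ++ x' :: v')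
    (hu : PrefixesGE f c u) (hx : height f u + f x < c)
    (hu' : PrefixesGE f c u') (hx' : height f u' + f x' < c) : u = u' := by
  rcases List.append_eq_append_iff.1 h with ⟨a, rfl, ha⟩ | ⟨a, rfl, ha⟩
  · simp [eq_nil_of_prefixesGE_of_height_add_lt hu' hx ha]
  · simp [eq_nil_of_prefixesGE_of_height_add_lt hu hx' ha]

lemma eq_nil_of_prefixesGE_height_of_posPrefixes
    (hua : PrefixesGE f (height f (u ++ a)) (u ++ a)) (haw : PosPrefixes f (a ++ w)) :
    a = [] := by
  by_contra hne
  have hu := hua u (by simp)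
  have ha := haw a (by simp) hne
  rw [height_append] at hu
  linarith

lemma append_inj_of_prefixesGE_height_of_posPrefixes (h : u ++ v = u' ++ v')
    (hu : PrefixesGE f (height f u) u) (hv : PosPrefixes f v)
    (hu' : PrefixesGE f (height f u') u') (hv' : PosPrefixes f v') : u = u' ∧ v = v' := by
  rcases List.append_eq_append_iff.1 h with ⟨a, rfl, rfl⟩ | ⟨a, rfl, rfl⟩
  · simp [eq_nil_of_prefixesGE_height_of_posPrefixes hu' hv]
  · simp [eq_nil_of_prefixesGE_height_of_posPrefixes hu hv']

end WeightedList

open WeightedList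

namespace Step

def dy (k : ℕ) : Step → ℤ
  | U => k
  | D => -1
  | H => 0

variable {k : ℕ} {c : ℤ}

@[simp] lemma height_replicate_H (j : ℕ) : height (dy k) (List.replicate j H) = 0 := by
  simp [height, dy]

@[simp] lemma prefixesGE_replicate_H (j : ℕ) :
    PrefixesGE (dy k) c (List.replicate j H) ↔ c ≤ 0 := by
  induction j with
  | zero => simp
  | succ j ih => simp [List.replicate_succ, ih, dy]

end Step

section

variable {k a n : ℕ} {w : List Step}

lemma pathDisp_snd (k a : ℕ) (w : List Step) : (pathDisp k a w).2 = height (Step.dy k) w := by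
  induction w with
  | nil => rfl
  | cons s w ih => cases s <;> simp_all [pathDisp, Step.dy, stepDisp]

lemma IsSuperPath.height_eq_zero (h : IsSuperPath k a n w) : height (Step.dy k) w = 0 := by
  rw [← pathDisp_snd k a, h]

lemma isPath_iff : IsPath k a n w ↔ IsSuperPath k a n w ∧ PrefixesGE (Step.dy k) 0 w := by
  simp only [IsPath, PrefixesGE, pathDisp_snd]

end

structure HumpSeed where
  flat : ℕ
  base : List Step
  tail : List Step
  climb : List Step

namespace HumpSeed

open Step

variable {k a n i : ℕ} {w L : List Step} (σ : HumpSeed)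

def word : List Step := List.replicate σ.flat H ++ U :: (σ.base ++ D :: (σ.tail ++ σ.climb))

def path : List Step := σ.base ++ σ.climb ++ U :: (List.replicate σ.flat H ++ D :: σ.tail)

def markedPath : List Step × ℕ := (σ.path, σ.base.length + σ.climb.length)

def IsValid (k : ℕ) : Prop :=
  PrefixesGE (dy k) 0 σ.base ∧ height (dy k) σ.base = 0 ∧
    PrefixesGE (dy k) (height (dy k) σ.tail) σ.tail ∧ PosPrefixes (dy k) σ.climb

def admissible (k a n : ℕ) : Set HumpSeed := {σ | σ.IsValid k ∧ IsSuperPath k a n σ.word}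

lemma pathDisp_path : pathDisp k a σ.path = pathDisp k a σ.word := by
  simp only [path, word, pathDisp, List.map_append, List.map_cons, List.sum_append,
    List.sum_cons]
  abel

lemma isHumpAt_path : IsHumpAt σ.path (σ.base.length + σ.climb.length) :=
  ⟨σ.flat, σ.tail, by rw [path, ← List.length_append, List.drop_left]; simp⟩

variable {σ}

lemma IsValid.isPath_path (hσ : σ.IsValid k) (hw : IsSuperPath k a n σ.word) :
    IsPath k a n σ.path := by
  obtain ⟨hbase, hbase0, htail, hclimb⟩ := hσ
  have hsum := hw.height_eq_zero
  simp only [word, height_append, height_cons, height_replicate_H, dy] at hsum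
  have hclimb0 := hclimb.prefixesGE_zero
  refine isPath_iff.2 ⟨(pathDisp_path σ).trans hw, ?_⟩
  simp only [path, prefixesGE_append, prefixesGE_cons, prefixesGE_replicate_H, height_append,
    height_replicate_H, dy]
  refine ⟨⟨hbase, hclimb0.mono (by linarith)⟩, ?_, ?_, ?_, htail.mono (by linarith)⟩ <;>
    linarith [hclimb0.le_height]

lemma exists_isValid_word_eq (hk : 0 < k) (hw : IsSuperPath k a n w) (hU : FirstNonHIsU w) :
    ∃ σ : HumpSeed, σ.IsValid k ∧ σ.word = w := by
  obtain ⟨l, r, rfl⟩ := hU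
  have hr : height (dy k) r < 0 := by
    have := hw.height_eq_zero
    simp only [height_append, height_cons, height_replicate_H, dy] at this
    omega
  obtain ⟨A, x, C, rfl, hA, hx⟩ := exists_append_cons_of_height_lt le_rfl hr
  obtain ⟨rfl, hA0⟩ : x = D ∧ height (dy k) A = 0 := by
    have := hA.le_height
    cases x <;> simp only [dy, reduceCtorEq, false_and, true_and] at hx ⊢ <;> omega
  obtain ⟨C1, C2, rfl, hC1, hC2⟩ := exists_append_prefixesGE_height_posPrefixes C
  exact ⟨⟨l, A, C1, C2⟩, ⟨hA, hA0, hC1, hC2⟩, rfl⟩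

lemma exists_isValid_markedPath_eq (hL : IsPath k a n L) (hh : IsHumpAt L i) :
    ∃ σ : HumpSeed, σ.IsValid k ∧ σ.markedPath = (L, i) := by
  obtain ⟨hsuper, hnonneg⟩ := isPath_iff.1 hL
  obtain ⟨j, S, hS⟩ := hh
  obtain ⟨P, rfl, rfl⟩ :
      ∃ P, P ++ U :: (List.replicate j H ++ D :: S) = L ∧ P.length = i := by
    refine ⟨L.take i, ?_, ?_⟩
    · conv_rhs => rw [← L.take_append_drop i, ← hS]
      simp
    · have := congrArg List.length hS
      simp only [List.length_append, List.length_cons, List.length_drop] at this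
      simp only [List.length_take]
      omega
  have hsum := hsuper.height_eq_zero
  simp only [height_append, height_cons, height_replicate_H, dy] at hsum
  simp only [prefixesGE_append, prefixesGE_cons, prefixesGE_replicate_H, height_replicate_H,
    dy] at hnonneg
  obtain ⟨hP, -, -, -, hS⟩ := hnonneg
  obtain ⟨A, C, rfl, hA, hC⟩ := exists_append_prefixesGE_height_posPrefixes P
  have hA0 : height (dy k) A = 0 := le_antisymm hA.nonpos (hP.of_prefix (by simp)).le_height
  refine ⟨⟨j, A, S, C⟩, ⟨hP.of_prefix (by simp), hA0, hS.mono (by linarith), hC⟩, ?_⟩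
  simp [markedPath, path]

lemma word_injOn : Set.InjOn word {σ : HumpSeed | σ.IsValid k} := by
  rintro ⟨j, A, T, C⟩ ⟨hA, hA0, hT, hC⟩ ⟨j', A', T', C'⟩ ⟨hA', hA0', hT', hC'⟩ h
  obtain ⟨rfl, h⟩ := replicate_append_cons_inj_s1 (by decide : U ≠ H) h
  obtain rfl :=
    append_cons_inj_of_prefixesGE h hA (by simp [dy, hA0]) hA' (by simp [dy, hA0'])
  simp only [List.append_cancel_left_eq, List.cons.injEq, true_and] at h
  obtain ⟨rfl, rfl⟩ := append_inj_of_prefixesGE_height_of_posPrefixes h hT hC hT' hC'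
  rfl

lemma markedPath_injOn : Set.InjOn markedPath {σ : HumpSeed | σ.IsValid k} := by
  rintro ⟨j, A, T, C⟩ ⟨hA, hA0, hT, hC⟩ ⟨j', A', T', C'⟩ ⟨hA', hA0', hT', hC'⟩ h
  simp only [markedPath, path, Prod.mk.injEq, ← List.length_append] at h
  obtain ⟨hpre, hhump⟩ := List.append_inj h.1 h.2
  simp only [List.cons.injEq, true_and] at hhump
  obtain ⟨rfl, rfl⟩ := replicate_append_cons_inj_s1 (by decide : D ≠ H) hhump
  obtain ⟨rfl, rfl⟩ := append_inj_of_prefixesGE_height_of_posPrefixes hpre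
    (hA0 ▸ hA) hC (hA0' ▸ hA') hC'
  rfl

lemma image_word_admissible (hk : 0 < k) :
    word '' admissible k a n = {w | IsSuperPath k a n w ∧ FirstNonHIsU w} := by
  ext w
  constructor
  · rintro ⟨σ, ⟨-, hw⟩, rfl⟩
    exact ⟨hw, σ.flat, _, rfl⟩
  · rintro ⟨hw, hU⟩
    obtain ⟨σ, hσ, rfl⟩ := exists_isValid_word_eq hk hw hU
    exact ⟨σ, ⟨hσ, hw⟩, rfl⟩

lemma image_markedPath_admissible :
    markedPath '' admissible k a n = {Lp | IsPath k a n Lp.1 ∧ IsHumpAt Lp.1 Lp.2} := by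
  ext ⟨L, i⟩
  constructor
  · rintro ⟨σ, ⟨hσ, hw⟩, he⟩
    rw [← he]
    exact ⟨hσ.isPath_path hw, σ.isHumpAt_path⟩
  · rintro ⟨hL, hh⟩
    obtain ⟨σ, hσ, he⟩ := exists_isValid_markedPath_eq hL hh
    obtain rfl : σ.path = L := congrArg Prod.fst he
    exact ⟨σ, ⟨hσ, (pathDisp_path σ).symm.trans hL.1⟩, he⟩

end HumpSeed

theorem stmt1_general (k a n : ℕ) (hk : 0 < k) :
    {Lp : List Step × ℕ | IsPath k a n Lp.1 ∧ IsHumpAt Lp.1 Lp.2}.ncard =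
      {w : List Step | IsSuperPath k a n w ∧ FirstNonHIsU w}.ncard := by
  rw [← HumpSeed.image_markedPath_admissible, ← HumpSeed.image_word_admissible hk,
    (HumpSeed.markedPath_injOn.mono fun _ hσ => hσ.1).ncard_image,
    (HumpSeed.word_injOn.mono fun _ hσ => hσ.1).ncard_image]

/-- The number of pairs `(L, p)` with `L` a `(k,a)`-path of order `n` and `p` a hump of `L`
equals the number of super `(k,a)`-paths of order `n` whose first non-horizontal step
is an up step. -/
theorem stmt1 (k a n : ℕ) (hk : 0 < k) (ha : 0 < a) :
    {Lp : List Step × ℕ | IsPath k a n Lp.1 ∧ IsHumpAt Lp.1 Lp.2}.ncard =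
      {w : List Step | IsSuperPath k a n w ∧ FirstNonHIsU w}.ncard :=
  stmt1_general k a n hk
end

section
/- Let S be a set of positive integers, a a positive integer, and n a natural number. The total number of humps over all (S,a)-paths of order n equals the number of super (S,a)-paths of order n whose first non-horizontal step is an up step. -/
/-- Steps for `(S,a)`-paths: up steps `U s = (1,s)`, down `D = (1,-1)`,
horizontal `H = (a,0)`. -/
inductive SStep : Type
  | U : ℕ → SStep
  | D : SStep
  | H : SStep
  deriving DecidableEq

/-- The displacement of a single step. -/
def sStepDisp (a : ℕ) : SStep → ℤ × ℤ
  | SStep.U s => (1, (s : ℤ))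
  | SStep.D => (1, -1)
  | SStep.H => ((a : ℤ), 0)

/-- The total displacement of a word of steps. -/
def sPathDisp (a : ℕ) (w : List SStep) : ℤ × ℤ := (w.map (sStepDisp a)).sum

/-- A super `(S,a)`-path of order `n`: a word using up steps `U s` only for `s ∈ S`,
with total displacement `(n,0)`. -/
def IsSSuperPath (S : Set ℕ) (a n : ℕ) (w : List SStep) : Prop :=
  (∀ s : ℕ, SStep.U s ∈ w → s ∈ S) ∧ sPathDisp a w = ((n : ℤ), 0)

/-- An `(S,a)`-path of order `n`: a super `(S,a)`-path all of whose partial sums have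
nonnegative `y`-coordinate. -/
def IsSPath (S : Set ℕ) (a n : ℕ) (w : List SStep) : Prop :=
  IsSSuperPath S a n w ∧ ∀ p : List SStep, p <+: w → 0 ≤ (sPathDisp a p).2

/-- The first letter different from `H` exists and is an up step. -/
def SFirstNonHIsU (w : List SStep) : Prop :=
  ∃ (l : ℕ) (s : ℕ) (r : List SStep), w = List.replicate l SStep.H ++ SStep.U s :: r

/-- There is a hump (a factor `U_s H^j D` for some `s` and `j ≥ 0`) starting at
position `i` of `w`. -/
def IsSHumpAt (w : List SStep) (i : ℕ) : Prop :=
  ∃ (s j : ℕ), (SStep.U s :: (List.replicate j SStep.H ++ [SStep.D])) <+: w.drop i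

/-!
Cut an `(S,a)`-path `A U_s H^j D B` at a marked hump and reassemble it as `H^j U_s B D A`: this is a
super path whose first non-horizontal step is up. The cut is recovered from the image because the
marked `D` ends the shortest prefix of minimal height of the tail `B D A`: every prefix of `A` has
nonnegative height since the path stays weakly above the axis, and every suffix of `B` has
nonpositive height since the path ends on the axis. Conversely, in a super path `H^l U_s r` with
`s > 0` the tail `r` has negative height, so its shortest prefix of minimal height ends with a down
step, and cutting there yields a path with a marked hump.
-/

namespace SStep

@[simp] def rise : SStep → ℤ
  | U s => s
  | D => -1
  | H => 0

end SStep

namespace SPath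

open SStep List

def height (w : List SStep) : ℤ := (w.map rise).sum

@[simp] lemma height_nil : height [] = 0 := rfl

@[simp] lemma height_cons (x : SStep) (w : List SStep) : height (x :: w) = x.rise + height w :=
  sum_cons

@[simp] lemma height_append (u v : List SStep) : height (u ++ v) = height u + height v := by
  simp [height]

@[simp] lemma height_replicate_H (j : ℕ) : height (replicate j H) = 0 := by
  simp [height]

lemma sPathDisp_snd (a : ℕ) (w : List SStep) : (sPathDisp a w).2 = height w := by
  induction w with
  | nil => rfl
  | cons x w ih => cases x <;> simp_all [sPathDisp, sStepDisp]

lemma replicate_H_append_cons_inj {j j' : ℕ} {x y : SStep} {u v : List SStep}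
    (hx : x ≠ H) (hy : y ≠ H) (he : replicate j H ++ x :: u = replicate j' H ++ y :: v) :
    j = j' ∧ x = y ∧ u = v := by
  induction j generalizing j' with
  | zero => cases j' <;> simp_all [replicate_succ]
  | succ m ih =>
    cases j' with
    | zero => simp_all [replicate_succ, eq_comm]
    | succ m' => simpa using ih (by simpa [replicate_succ] using he)

lemma isSSuperPath_of_perm {S : Set ℕ} {a n : ℕ} {w w' : List SStep} (hp : w ~ w')
    (h : IsSSuperPath S a n w) : IsSSuperPath S a n w' :=
  ⟨fun s hs => h.1 s (hp.mem_iff.2 hs), by rw [sPathDisp, ← (hp.map _).sum_eq]; exact h.2⟩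

lemma height_eq_zero_of_isSSuperPath {S : Set ℕ} {a n : ℕ} {w : List SStep}
    (h : IsSSuperPath S a n w) : height w = 0 := by
  rw [← sPathDisp_snd a, h.2]

def PrefixesAbove (c : ℤ) (w : List SStep) : Prop := ∀ p, p <+: w → c ≤ height p

lemma PrefixesAbove.le_height {c : ℤ} {w : List SStep} (h : PrefixesAbove c w) : c ≤ height w :=
  h w (prefix_refl w)

lemma PrefixesAbove.nonpos {c : ℤ} {w : List SStep} (h : PrefixesAbove c w) : c ≤ 0 :=
  h [] nil_prefix

lemma PrefixesAbove.mono {c c' : ℤ} {w : List SStep} (h : PrefixesAbove c w) (hc : c' ≤ c) :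
    PrefixesAbove c' w :=
  fun p hp => hc.trans (h p hp)

lemma prefixesAbove_nil {c : ℤ} : PrefixesAbove c [] ↔ c ≤ 0 :=
  ⟨PrefixesAbove.nonpos, fun h p hp => by simpa [prefix_nil.1 hp] using h⟩

lemma prefixesAbove_cons {c : ℤ} {x : SStep} {w : List SStep} :
    PrefixesAbove c (x :: w) ↔ c ≤ 0 ∧ PrefixesAbove (c - x.rise) w := by
  simp only [PrefixesAbove, prefix_cons_iff]
  constructor
  · intro h
    refine ⟨h [] (.inl rfl), fun t ht => ?_⟩
    have := h (x :: t) (.inr ⟨t, rfl, ht⟩)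
    simp only [height_cons] at this
    linarith
  · rintro ⟨h0, h⟩ p (rfl | ⟨t, rfl, ht⟩)
    · simpa using h0
    · have := h t ht
      simp only [height_cons]
      linarith

lemma prefixesAbove_append {c : ℤ} {u v : List SStep} :
    PrefixesAbove c (u ++ v) ↔ PrefixesAbove c u ∧ PrefixesAbove (c - height u) v := by
  induction u generalizing c with
  | nil => simpa [prefixesAbove_nil] using fun h : PrefixesAbove c v => h.nonpos
  | cons x u ih => simp [prefixesAbove_cons, ih, sub_sub, and_assoc]

lemma prefixesAbove_replicate_H {c : ℤ} {j : ℕ} :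
    PrefixesAbove c (replicate j H) ↔ c ≤ 0 := by
  induction j with
  | zero => exact prefixesAbove_nil
  | succ j ih => simp [replicate_succ, prefixesAbove_cons, ih]

lemma isSPath_iff {S : Set ℕ} {a n : ℕ} {w : List SStep} :
    IsSPath S a n w ↔ IsSSuperPath S a n w ∧ PrefixesAbove 0 w := by
  simp [IsSPath, PrefixesAbove, sPathDisp_snd]

def IsFirstMinPrefix (r p : List SStep) : Prop :=
  p <+: r ∧ PrefixesAbove (height p) r ∧ ∀ q, q <+: p → q ≠ p → height p < height q

lemma IsFirstMinPrefix.unique {r p p' : List SStep} (h : IsFirstMinPrefix r p)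
    (h' : IsFirstMinPrefix r p') : p = p' := by
  by_contra hne
  rcases prefix_or_prefix_of_prefix h.1 h'.1 with hp | hp
  · linarith [h'.2.2 p hp hne, h.2.1 p' h'.1]
  · linarith [h.2.2 p' hp (Ne.symm hne), h'.2.1 p h.1]

lemma exists_isFirstMinPrefix (r : List SStep) : ∃ p, IsFirstMinPrefix r p := by
  obtain ⟨p, hp, hmin⟩ := r.inits.toFinset.exists_min_image
    (fun q => toLex (height q, q.length)) ⟨[], by simp⟩
  simp only [mem_toFinset, mem_inits, Prod.Lex.toLex_le_toLex] at hp hmin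
  refine ⟨p, hp, fun q hq => ?_, fun q hq hne => ?_⟩
  · rcases hmin q hq with h | h <;> omega
  · have hlen : q.length < p.length :=
      lt_of_le_of_ne hq.length_le fun e => hne (hq.eq_of_length e)
    rcases hmin q (hq.trans hp) with h | h <;> omega

lemma IsFirstMinPrefix.exists_split {r p : List SStep} (h : IsFirstMinPrefix r p)
    (hr : height r < 0) : ∃ B A, r = B ++ D :: A ∧ p = B ++ [D] := by
  obtain ⟨⟨A, rfl⟩, hmin, hstrict⟩ := h
  have hp : p ≠ [] := by
    rintro rfl
    exact absurd ((hmin _ (prefix_refl _)).trans_lt hr) (by simp)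
  obtain ⟨B, x, rfl⟩ := (eq_nil_or_concat p).resolve_left hp
  rw [concat_eq_append] at *
  have hx : x = D := by
    have := hstrict B (prefix_append B [x]) (by simp)
    cases x <;> simp at this ⊢; omega
  subst hx
  exact ⟨B, A, by simp, rfl⟩

/-- `PrefixesAbove (height B) B` says that every suffix of `B` has nonpositive height. -/
lemma isFirstMinPrefix_split_iff {B A : List SStep} :
    IsFirstMinPrefix (B ++ D :: A) (B ++ [D]) ↔
      PrefixesAbove (height B) B ∧ PrefixesAbove 0 A := by
  have hstrict : (∀ q, q <+: B ++ [D] → q ≠ B ++ [D] → height (B ++ [D]) < height q) ↔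
      PrefixesAbove (height B) B := by
    simp only [prefix_concat_iff, PrefixesAbove, height_append, height_cons, rise, height_nil]
    refine ⟨fun h q hq => ?_, fun h q hq hne => ?_⟩
    · have := h q (.inr hq) (fun e => by simpa [e] using hq.length_le)
      omega
    · have := h q (hq.resolve_left hne)
      omega
  simp only [IsFirstMinPrefix, hstrict, prefixesAbove_append, prefixesAbove_cons]
  constructor
  · rintro ⟨-, ⟨-, -, hA⟩, hB⟩
    exact ⟨hB, by simpa using hA⟩
  · rintro ⟨hB, hA⟩
    exact ⟨by simp, ⟨hB.mono (by simp), by simp, by simpa using hA⟩, hB⟩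

structure Hump where
  pre : List SStep
  up : ℕ
  flat : ℕ
  post : List SStep

namespace Hump

def word (h : Hump) : List SStep :=
  h.pre ++ U h.up :: (replicate h.flat H ++ D :: h.post)

def rotate (h : Hump) : List SStep :=
  replicate h.flat H ++ U h.up :: (h.post ++ D :: h.pre)

lemma rotate_perm_word (h : Hump) : h.rotate ~ h.word :=
  perm_iff_count.2 fun x => by simp only [rotate, word, count_append, count_cons]; omega

lemma word_pre_length_injective : Function.Injective fun h : Hump => (h.word, h.pre.length) := by
  rintro ⟨A, s, j, B⟩ ⟨A', s', j', B'⟩ he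
  simp only [word, Prod.mk.injEq] at he
  obtain ⟨rfl, hrest⟩ := append_inj he.1 he.2
  simp only [cons.injEq, U.injEq] at hrest
  obtain ⟨rfl, hrest⟩ := hrest
  obtain ⟨rfl, -, rfl⟩ := replicate_H_append_cons_inj (by simp) (by simp) hrest
  rfl

lemma isSHumpAt_iff {P : List SStep} {i : ℕ} :
    IsSHumpAt P i ↔ ∃ h : Hump, h.word = P ∧ h.pre.length = i := by
  constructor
  · rintro ⟨s, j, B, hB⟩
    have hi : i ≤ P.length := by
      by_contra hi
      simp [drop_eq_nil_of_le ((not_le.1 hi).le)] at hB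
    refine ⟨⟨P.take i, s, j, B⟩, ?_, by simp [hi]⟩
    conv_rhs => rw [← take_append_drop i P, ← hB]
    simp [word]
  · rintro ⟨⟨A, s, j, B⟩, rfl, rfl⟩
    exact ⟨s, j, B, by simp [word]⟩

lemma prefixesAbove_word_iff {h : Hump} (h0 : height h.word = 0) :
    PrefixesAbove 0 h.word ↔ PrefixesAbove (height h.post) h.post ∧ PrefixesAbove 0 h.pre := by
  have hpost : -height h.pre - h.up + 1 = height h.post := by
    simp only [word, height_append, height_cons, rise, height_replicate_H] at h0
    linarith
  simp only [word, prefixesAbove_append, prefixesAbove_cons, prefixesAbove_replicate_H, rise,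
    height_replicate_H, zero_sub, sub_zero, sub_neg_eq_add, hpost]
  constructor
  · rintro ⟨hpre, -, -, -, hpost⟩
    exact ⟨hpost, hpre⟩
  · rintro ⟨hpost, hpre⟩
    have := hpre.le_height
    exact ⟨hpre, by omega, by omega, by omega, hpost⟩

lemma isSPath_word_iff {S : Set ℕ} {a n : ℕ} {h : Hump} :
    IsSPath S a n h.word ↔ IsSSuperPath S a n h.rotate ∧
      IsFirstMinPrefix (h.post ++ D :: h.pre) (h.post ++ [D]) := by
  have hperm := h.rotate_perm_word
  rw [isSPath_iff, isFirstMinPrefix_split_iff]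
  constructor
  · rintro ⟨hsup, hpre⟩
    exact ⟨isSSuperPath_of_perm hperm.symm hsup,
      (prefixesAbove_word_iff (height_eq_zero_of_isSSuperPath hsup)).1 hpre⟩
  · rintro ⟨hsup, hsplit⟩
    have hsup := isSSuperPath_of_perm hperm hsup
    exact ⟨hsup, (prefixesAbove_word_iff (height_eq_zero_of_isSSuperPath hsup)).2 hsplit⟩

end Hump

lemma rotate_injOn (S : Set ℕ) (a n : ℕ) :
    Set.InjOn Hump.rotate {h | IsSPath S a n h.word} := by
  rintro ⟨A, s, j, B⟩ hh ⟨A', s', j', B'⟩ hh' he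
  replace hh := (Hump.isSPath_word_iff.1 hh).2
  replace hh' := (Hump.isSPath_word_iff.1 hh').2
  obtain ⟨rfl, hs, hr⟩ := replicate_H_append_cons_inj (by simp) (by simp) he
  simp only [U.injEq] at hs
  simp only at hh hh'
  rw [← hr] at hh'
  obtain rfl := append_cancel_right (hh.unique hh')
  obtain rfl : A = A' := by simpa using hr
  rw [hs]

lemma humpOccurrences_eq_image (S : Set ℕ) (a n : ℕ) :
    {Lp : List SStep × ℕ | IsSPath S a n Lp.1 ∧ IsSHumpAt Lp.1 Lp.2} =
      (fun h : Hump => (h.word, h.pre.length)) '' {h | IsSPath S a n h.word} := by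
  ext ⟨P, i⟩
  constructor
  · rintro ⟨hP, hhump⟩
    obtain ⟨h, rfl, rfl⟩ := Hump.isSHumpAt_iff.1 hhump
    exact ⟨h, hP, rfl⟩
  · rintro ⟨h, hh, he⟩
    obtain ⟨rfl, rfl⟩ := Prod.mk.inj he
    exact ⟨hh, Hump.isSHumpAt_iff.2 ⟨h, rfl, rfl⟩⟩

lemma rotate_image_eq {S : Set ℕ} (hS : ∀ s ∈ S, 0 < s) (a n : ℕ) :
    Hump.rotate '' {h | IsSPath S a n h.word} =
      {w | IsSSuperPath S a n w ∧ SFirstNonHIsU w} := by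
  ext w
  constructor
  · rintro ⟨h, hh, rfl⟩
    exact ⟨(Hump.isSPath_word_iff.1 hh).1, h.flat, h.up, _, rfl⟩
  · rintro ⟨hw, l, s, r, rfl⟩
    have hs : 0 < s := hS s (hw.1 s (by simp))
    have hr : height r < 0 := by
      have := height_eq_zero_of_isSSuperPath hw
      simp only [height_append, height_replicate_H, height_cons, rise] at this
      omega
    obtain ⟨p, hp⟩ := exists_isFirstMinPrefix r
    obtain ⟨B, A, rfl, rfl⟩ := hp.exists_split hr
    exact ⟨⟨A, s, l, B⟩, Hump.isSPath_word_iff.2 ⟨hw, hp⟩, rfl⟩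

end SPath

theorem stmt5_general (S : Set ℕ) (hS : ∀ s ∈ S, 0 < s) (a n : ℕ) :
    {Lp : List SStep × ℕ | IsSPath S a n Lp.1 ∧ IsSHumpAt Lp.1 Lp.2}.ncard =
      {w : List SStep | IsSSuperPath S a n w ∧ SFirstNonHIsU w}.ncard := by
  rw [SPath.humpOccurrences_eq_image, ← SPath.rotate_image_eq hS,
    Set.ncard_image_of_injective _ SPath.Hump.word_pre_length_injective,
    (SPath.rotate_injOn S a n).ncard_image]

/-- The total number of humps over all `(S,a)`-paths of order `n` equals the number of
super `(S,a)`-paths of order `n` whose first non-horizontal step is an up step. -/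
theorem stmt5 (S : Set ℕ) (hS : ∀ s ∈ S, 0 < s) (a n : ℕ) (ha : 0 < a) :
    {Lp : List SStep × ℕ | IsSPath S a n Lp.1 ∧ IsSHumpAt Lp.1 Lp.2}.ncard =
      {w : List SStep | IsSSuperPath S a n w ∧ SFirstNonHIsU w}.ncard :=
  stmt5_general S hS a n
end

section
/- Let n, m be positive integers with gcd(n,m) = 1, and let P be a free (n,m)-path. Then exactly one cyclic rotation of P is an (n,m)-Dyck path; that is, the equivalence class [P] contains a unique (n,m)-Dyck path. -/
/-- A free `(n,m)`-path: a word over `{U, D}` (here `true` = `U` = step `(0,1)`,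
`false` = `D` = step `(1,0)`) with exactly `m` letters `U` and `n` letters `D`. -/
def IsFreePath (n m : ℕ) (w : List Bool) : Prop :=
  w.count true = m ∧ w.count false = n

/-- An `(n,m)`-Dyck path: a free `(n,m)`-path that never goes below the line
`y = (m/n)x`, i.e. every prefix with `u` letters `U` and `d` letters `D`
satisfies `n·u ≥ m·d`. -/
def IsDyckPath (n m : ℕ) (w : List Bool) : Prop :=
  IsFreePath n m w ∧ ∀ p : List Bool, p <+: w → m * p.count false ≤ n * p.count true

/-!
Give the letter `U` weight `n` and `D` weight `-m`, so that the height `n·#U - m·#D` of a prefix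
measures how far the path lies above the line `y = (m/n)x`, and a free path returns to height `0`.
Rotating a word of total weight `0` at position `j` subtracts the height of the `j`-th prefix from
every prefix height (cyclically), so the rotation is a Dyck path exactly when the `j`-th prefix
height is minimal. Modulo `n + m` the weight of either letter is `n`, so the prefix of length `k`
has height `≡ n·k`; as `n` is a unit modulo `n + m`, the `n + m` prefix heights are distinct and
the minimum is attained at exactly one position.
-/

namespace List

variable {l : List ℤ} {j k : ℕ}

theorem sum_take_rotate_of_add_le (hjk : j + k ≤ l.length) :
    ((l.rotate j).take k).sum = (l.take (j + k)).sum - (l.take j).sum := by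
  rw [rotate_eq_drop_append_take (by omega), take_append_of_le_length (by simp; omega), take_add,
    sum_append]
  ring

theorem sum_take_rotate_of_le_add (hl : l.sum = 0) (hj : j ≤ l.length) (hk : k ≤ l.length)
    (hjk : l.length ≤ j + k) :
    ((l.rotate j).take k).sum = (l.take (j + k - l.length)).sum - (l.take j).sum := by
  have hdrop : (l.drop j).sum = -(l.take j).sum := by
    linarith [sum_take_add_sum_drop l j]
  rw [rotate_eq_drop_append_take hj, take_append, take_of_length_le (by simp; omega), take_take,
    min_eq_left (by simp; omega), sum_append, hdrop, length_drop,
    show k - (l.length - j) = j + k - l.length by omega]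
  ring

/-- The cycle lemma. -/
theorem prefix_sums_rotate_nonneg_iff (hl : l.sum = 0) (hj : j ≤ l.length) :
    (∀ p, p <+: l.rotate j → 0 ≤ p.sum) ↔ ∀ k ≤ l.length, (l.take j).sum ≤ (l.take k).sum := by
  constructor
  · intro h k hk
    rcases le_or_gt j k with hjk | hkj
    · have := h _ (take_prefix (k - j) _)
      rw [sum_take_rotate_of_add_le (by omega), Nat.add_sub_cancel' hjk] at this
      linarith
    · have := h _ (take_prefix (l.length - j + k) _)
      rw [sum_take_rotate_of_le_add hl hj (by omega) (by omega),
        show j + (l.length - j + k) - l.length = k by omega] at this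
      linarith
  · intro h p hp
    have hk : p.length ≤ l.length := length_rotate (l := l) (n := j) ▸ hp.length_le
    rw [prefix_iff_eq_take.1 hp]
    rcases le_total (j + p.length) l.length with hjk | hjk
    · rw [sum_take_rotate_of_add_le hjk]
      linarith [h _ hjk]
    · rw [sum_take_rotate_of_le_add hl hj hk hjk]
      linarith [h (j + p.length - l.length) (by omega)]

end List

open List

namespace LatticePath

variable {n m : ℕ}

def stepWeight (n m : ℕ) : Bool → ℤ
  | true => n
  | false => -m

def height (n m : ℕ) (w : List Bool) : ℤ := (w.map (stepWeight n m)).sum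

theorem height_eq (w : List Bool) :
    height n m w = n * w.count true - m * w.count false := by
  induction w with
  | nil => simp [height]
  | cons b w ih =>
    simp only [height] at ih
    cases b <;> simp [height, stepWeight, ih] <;> ring

theorem isDyckPath_iff {w : List Bool} :
    IsDyckPath n m w ↔ IsFreePath n m w ∧ ∀ p, p <+: w.map (stepWeight n m) → 0 ≤ p.sum := by
  refine and_congr_right fun _ => ⟨?_, ?_⟩
  · intro h p hp
    obtain ⟨q, hq, rfl⟩ := prefix_map_iff.1 hp
    rw [← height, height_eq, sub_nonneg]
    exact_mod_cast h q hq
  · intro h q hq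
    have := h _ (hq.map _)
    rw [← height, height_eq, sub_nonneg] at this
    exact_mod_cast this

theorem cast_height (w : List Bool) : (height n m w : ZMod (n + m)) = n * w.length := by
  have hnm : (n : ZMod (n + m)) + m = 0 := by exact_mod_cast ZMod.natCast_self (n + m)
  rw [height_eq, ← count_true_add_count_false]
  push_cast
  linear_combination (-(w.count false : ZMod (n + m))) * hnm

theorem length_eq_of_height_eq (hnm : n.Coprime m) {p q : List Bool}
    (hp : p.length < n + m) (hq : q.length < n + m) (h : height n m p = height n m q) :
    p.length = q.length := by
  have hunit : IsUnit (n : ZMod (n + m)) :=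
    (ZMod.isUnit_iff_coprime n (n + m)).2 (Nat.coprime_self_add_right.2 hnm)
  have := congrArg (Int.cast : ℤ → ZMod (n + m)) h
  rw [cast_height, cast_height] at this
  have hmod := hunit.mul_left_cancel this
  rwa [ZMod.natCast_eq_natCast_iff', Nat.mod_eq_of_lt hp, Nat.mod_eq_of_lt hq] at hmod

end LatticePath

open LatticePath

namespace IsFreePath

variable {n m : ℕ} {w : List Bool}

theorem length_eq (hw : IsFreePath n m w) : w.length = n + m := by
  rw [← count_true_add_count_false, hw.1, hw.2, add_comm]

theorem height_eq_zero (hw : IsFreePath n m w) : height n m w = 0 := by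
  rw [height_eq, hw.1, hw.2]
  ring

theorem rotate (hw : IsFreePath n m w) (i : ℕ) : IsFreePath n m (w.rotate i) := by
  rw [IsFreePath, (w.rotate_perm i).count_eq, (w.rotate_perm i).count_eq]
  exact hw

theorem isDyckPath_rotate_iff (hw : IsFreePath n m w) {j : ℕ}
    (hj : j ≤ w.length) :
    IsDyckPath n m (w.rotate j) ↔
      ∀ k ≤ w.length, height n m (w.take j) ≤ height n m (w.take k) := by
  rw [isDyckPath_iff, and_iff_right (hw.rotate j), map_rotate,
    prefix_sums_rotate_nonneg_iff hw.height_eq_zero (by simpa using hj), length_map]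
  simp only [height, map_take]

end IsFreePath

theorem stmt7_general (n m : ℕ) (h : Nat.gcd n m = 1)
    (P : List Bool) (hP : IsFreePath n m P) :
    ∃! Q : List Bool, (∃ i : ℕ, Q = P.rotate i) ∧ IsDyckPath n m Q := by
  have hlen := hP.length_eq
  have hpos : 0 < n + m := Nat.pos_of_ne_zero fun h0 => by
    simp [Nat.add_eq_zero_iff.1 h0] at h
  obtain ⟨j, hj, hmin⟩ := Finset.exists_min_image (Finset.range (n + m))
    (fun k => height n m (P.take k)) ⟨0, Finset.mem_range.2 hpos⟩
  rw [Finset.mem_range] at hj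
  have hmin_j : ∀ k ≤ P.length, height n m (P.take j) ≤ height n m (P.take k) := by
    intro k hk
    rcases hk.lt_or_eq with hk | rfl
    · exact hmin k (Finset.mem_range.2 (hlen ▸ hk))
    · rw [take_of_length_le le_rfl, hP.height_eq_zero]
      simpa [height] using hmin 0 (Finset.mem_range.2 hpos)
  refine ⟨P.rotate j, ⟨⟨j, rfl⟩, (hP.isDyckPath_rotate_iff (by omega)).2 hmin_j⟩, ?_⟩
  rintro _ ⟨⟨i, rfl⟩, hdyck⟩
  rw [← rotate_mod, hlen] at hdyck ⊢
  have hi : i % (n + m) < n + m := Nat.mod_lt _ hpos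
  have hmin_i := (hP.isDyckPath_rotate_iff (by omega)).1 hdyck
  have := length_eq_of_height_eq h (by simpa [hlen] using hi) (by simpa [hlen] using hj)
    (le_antisymm (hmin_i j (by omega)) (hmin_j _ (by omega)))
  simp only [length_take, hlen] at this
  rw [show i % (n + m) = j by omega]

/-- If `gcd(n,m) = 1`, then among the cyclic rotations of a free `(n,m)`-path `P`
there is exactly one `(n,m)`-Dyck path. -/
theorem stmt7 (n m : ℕ) (hn : 0 < n) (hm : 0 < m) (h : Nat.gcd n m = 1)
    (P : List Bool) (hP : IsFreePath n m P) :
    ∃! Q : List Bool, (∃ i : ℕ, Q = P.rotate i) ∧ IsDyckPath n m Q :=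
  stmt7_general n m h P hP
end

section
/- Let n, m be positive integers with gcd(n,m) = 1. Then the number of (n,m)-Dyck paths equals (1/(n+m))·binomial(n+m, n); equivalently, (n+m) times the number of (n,m)-Dyck paths equals binomial(n+m, n). -/
def val (n m : ℕ) (w : List Bool) : ℤ :=
  (n : ℤ) * w.count true - (m : ℤ) * w.count false

lemma val_append (n m : ℕ) (a b : List Bool) :
    val n m (a ++ b) = val n m a + val n m b := by
  simp [val, List.count_append]; ring

lemma count_add_count (w : List Bool) : w.count true + w.count false = w.length := by
  induction w with
  | nil => simp
  | cons a t ih => cases a <;> simp [List.count_cons] <;> omega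

lemma card_filter_get (w : List Bool) (b : Bool) :
    (Finset.univ.filter fun i : Fin w.length => w.get i = b).card = w.count b := by
  rw [Finset.card_filter]
  induction w with
  | nil => simp
  | cons a t ih =>
    simp only [List.length_cons]
    rw [Fin.sum_univ_succ]
    have : ∀ i : Fin t.length, (a :: t).get i.succ = t.get i := fun i => rfl
    simp only [this]
    rw [ih, List.count_cons]
    cases a <;> cases b <;> simp <;> omega

lemma take_val_segment (n m : ℕ) (w : List Bool) {i j : ℕ} (hij : i ≤ j) :
    val n m (w.take j) = val n m (w.take i) + val n m ((w.take j).drop i) := by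
  conv_lhs => rw [← List.take_append_drop i (w.take j)]
  rw [val_append, List.take_take, min_eq_left hij]

lemma length_free {n m : ℕ} {w : List Bool} (hw : IsFreePath n m w) :
    w.length = n + m := by
  obtain ⟨h1, h2⟩ := hw
  have := count_add_count w
  omega

lemma val_free {n m : ℕ} {w : List Bool} (hw : IsFreePath n m w) :
    val n m w = 0 := by
  obtain ⟨h1, h2⟩ := hw
  simp [val, h1, h2]; ring

lemma A_inj {n m : ℕ} (hn : 0 < n) (hm : 0 < m) (h : Nat.gcd n m = 1)
    {w : List Bool} (hw : IsFreePath n m w) {i j : ℕ} (hij : i < j) (hj : j ≤ n + m)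
    (heq : val n m (w.take i) = val n m (w.take j)) : i = 0 ∧ j = n + m := by
  have hlen : w.length = n + m := length_free hw
  set seg := (w.take j).drop i with hseg
  have hvs : val n m seg = 0 := by
    have := take_val_segment n m w hij.le (i := i) (j := j)
    rw [← hseg] at this
    linarith
  have hlseg : seg.length = j - i := by
    simp [hseg, hlen]
    omega
  have hcnt := count_add_count seg
  -- n * u = m * d
  have hnm : n * seg.count true = m * seg.count false := by
    have : (n : ℤ) * seg.count true = (m : ℤ) * seg.count false := by
      simp only [val] at hvs; linarith
    exact_mod_cast this
  have hcop : Nat.Coprime m n := (Nat.coprime_iff_gcd_eq_one.mpr h).symm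
  have hmd : m ∣ seg.count true := hcop.dvd_of_dvd_mul_left ⟨seg.count false, hnm⟩
  obtain ⟨a, ha⟩ := hmd
  have hd : seg.count false = n * a := by
    have : m * (n * a) = m * seg.count false := by rw [← hnm, ha]; ring
    exact (Nat.eq_of_mul_eq_mul_left hm this).symm
  have hsum : seg.count true + seg.count false = j - i := by omega
  rw [ha, hd] at hsum
  have h2 : (m + n) * a = j - i := by rw [Nat.add_mul]; omega
  have ha1 : 0 < a := by
    rcases Nat.eq_zero_or_pos a with h0 | h0
    · subst h0; simp at h2; omega
    · exact h0
  have h3 : m + n ≤ (m + n) * a := Nat.le_mul_of_pos_right _ ha1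
  omega

lemma isDyck_iff (n m : ℕ) (w : List Bool) :
    IsDyckPath n m w ↔ IsFreePath n m w ∧ ∀ k, 0 ≤ val n m (w.take k) := by
  constructor
  · rintro ⟨hf, hp⟩
    refine ⟨hf, fun k => ?_⟩
    have h := hp (w.take k) (List.take_prefix k w)
    have : ((m : ℤ)) * (w.take k).count false ≤ (n : ℤ) * (w.take k).count true := by
      exact_mod_cast h
    simp only [val]; linarith
  · rintro ⟨hf, hp⟩
    refine ⟨hf, fun p hpre => ?_⟩
    have hp' := hp p.length
    rw [← List.prefix_iff_eq_take.mp hpre] at hp'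
    simp only [val] at hp'
    have : ((m : ℤ)) * p.count false ≤ (n : ℤ) * p.count true := by linarith
    exact_mod_cast this

lemma free_rotate {n m : ℕ} {w : List Bool} (hw : IsFreePath n m w) (k : ℕ) :
    IsFreePath n m (w.rotate k) := by
  obtain ⟨h1, h2⟩ := hw
  exact ⟨((List.rotate_perm w k).count_eq true).trans h1,
    ((List.rotate_perm w k).count_eq false).trans h2⟩

lemma rot_prefix {n m : ℕ} {w : List Bool} (hw : IsFreePath n m w)
    {k j : ℕ} (hk : k ≤ n + m) (hj : j ≤ n + m) :
    val n m ((w.rotate k).take j) =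
      (if k + j ≤ n + m then val n m (w.take (k + j)) else val n m (w.take (k + j - (n + m))))
        - val n m (w.take k) := by
  have hlen : w.length = n + m := length_free hw
  have hv0 : val n m w = 0 := val_free hw
  rw [List.rotate_eq_drop_append_take (by omega), List.take_append]
  rw [val_append]
  have hld : (w.drop k).length = n + m - k := by simp [hlen]
  rw [hld]
  have hseg := take_val_segment n m w (i := k) (j := min (k + j) (n + m)) (by omega)
  have hdt : (w.take (min (k + j) (n + m))).drop k = (w.drop k).take j := by
    rw [List.drop_take]
    rcases le_or_gt (k + j) (n + m) with hc | hc
    · rw [min_eq_left hc]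
      congr 1
      omega
    · rw [min_eq_right hc.le,
        List.take_of_length_le (le_of_eq hld),
        List.take_of_length_le (by rw [hld]; omega)]
  rw [hdt] at hseg
  rw [List.take_take, min_eq_left (by omega : j - (n + m - k) ≤ k)]
  rcases le_or_gt (k + j) (n + m) with hc | hc
  · rw [if_pos hc]
    rw [min_eq_left hc] at hseg
    have hj0 : j - (n + m - k) = 0 := by omega
    rw [hj0]
    have : val n m (List.take 0 w) = 0 := by simp [val]
    linarith
  · rw [if_neg (by omega)]
    rw [min_eq_right hc.le, List.take_of_length_le (by omega)] at hseg
    have he : j - (n + m - k) = k + j - (n + m) := by omega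
    rw [he]
    linarith

lemma dyck_rotate_iff {n m : ℕ} {w : List Bool} (hw : IsFreePath n m w)
    {k : ℕ} (hk : k ≤ n + m) :
    IsDyckPath n m (w.rotate k) ↔
      ∀ i ≤ n + m, val n m (w.take k) ≤ val n m (w.take i) := by
  have hlen : w.length = n + m := length_free hw
  have hv0 : val n m w = 0 := val_free hw
  have hfr : IsFreePath n m (w.rotate k) := free_rotate hw k
  have hlr : (w.rotate k).length = n + m := length_free hfr
  rw [isDyck_iff]
  constructor
  · rintro ⟨-, hp⟩ i hi
    rcases le_or_gt k i with hki | hki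
    · have := hp (i - k)
      rw [rot_prefix hw hk (by omega)] at this
      rw [if_pos (by omega)] at this
      have he : k + (i - k) = i := by omega
      rw [he] at this
      linarith
    · rcases Nat.eq_zero_or_pos i with h0 | h0
      · subst h0
        have := hp (n + m - k)
        rw [rot_prefix hw hk (by omega)] at this
        rw [if_pos (by omega)] at this
        have he : k + (n + m - k) = n + m := by omega
        rw [he] at this
        have h2 : val n m (List.take (n + m) w) = 0 := by
          rw [List.take_of_length_le (by omega)]; exact hv0
        have h3 : val n m (List.take 0 w) = 0 := by simp [val]
        linarith
      · have := hp (n + m - k + i)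
        rw [rot_prefix hw hk (by omega)] at this
        rw [if_neg (by omega)] at this
        have he : k + (n + m - k + i) - (n + m) = i := by omega
        rw [he] at this
        linarith
  · intro hmin
    refine ⟨hfr, fun j => ?_⟩
    rcases le_or_gt j (n + m) with hj | hj
    · rw [rot_prefix hw hk hj]
      rcases le_or_gt (k + j) (n + m) with hc | hc
      · rw [if_pos hc]
        have := hmin (k + j) hc
        linarith
      · rw [if_neg (by omega)]
        have := hmin (k + j - (n + m)) (by omega)
        linarith
    · rw [List.take_of_length_le (by omega), val_free hfr]

lemma unique_rot {n m : ℕ} (hn : 0 < n) (hm : 0 < m) (h : Nat.gcd n m = 1)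
    {v : List Bool} (hv : IsFreePath n m v) {k k' : ℕ} (hk : k < n + m) (hk' : k' < n + m)
    (h1 : IsDyckPath n m (v.rotate k)) (h2 : IsDyckPath n m (v.rotate k')) : k = k' := by
  rw [dyck_rotate_iff hv hk.le] at h1
  rw [dyck_rotate_iff hv hk'.le] at h2
  have heq : val n m (v.take k) = val n m (v.take k') :=
    le_antisymm (h1 k' (by omega)) (h2 k (by omega))
  rcases lt_trichotomy k k' with hc | hc | hc
  · have := A_inj hn hm h hv hc (by omega) heq
    omega
  · exact hc
  · have := A_inj hn hm h hv hc (by omega) heq.symm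
    omega

lemma exists_rot {n m : ℕ} (hn : 0 < n) (hm : 0 < m)
    {v : List Bool} (hv : IsFreePath n m v) :
    ∃ k < n + m, IsDyckPath n m (v.rotate k) := by
  obtain ⟨k, hk, hmin⟩ := Finset.exists_min_image (Finset.range (n + m))
    (fun i => val n m (v.take i)) ⟨0, by simp; omega⟩
  rw [Finset.mem_range] at hk
  refine ⟨k, hk, ?_⟩
  rw [dyck_rotate_iff hv hk.le]
  intro i hi
  rcases lt_or_eq_of_le hi with hi' | hi'
  · exact hmin i (Finset.mem_range.mpr hi')
  · subst hi'
    have h2 : val n m (List.take (n + m) v) = 0 := by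
      rw [List.take_of_length_le (le_of_eq (length_free hv))]; exact val_free hv
    have h3 := hmin 0 (Finset.mem_range.mpr (by omega))
    have h4 : val n m (List.take 0 v) = 0 := by simp [val]
    linarith

lemma rotate_mod' {L : ℕ} {l : List Bool} (hl : l.length = L) (x : ℕ) :
    l.rotate (x % L) = l.rotate x := by
  subst hl; exact List.rotate_mod l x

lemma rotate_len' {L : ℕ} {l : List Bool} (hl : l.length = L) :
    l.rotate L = l := by
  subst hl; exact List.rotate_length l

lemma card_free_eq {n m : ℕ} (hn : 0 < n) (hm : 0 < m) (h : Nat.gcd n m = 1) :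
    Nat.card {w : List Bool // IsFreePath n m w} =
      (n + m) * {w : List Bool | IsDyckPath n m w}.ncard := by
  have hL : 0 < n + m := by omega
  have hm1 : ∀ k : ℕ, k < n + m → (n + m - k) % (n + m) = if k = 0 then 0 else n + m - k := by
    intro k hk
    rcases Nat.eq_zero_or_pos k with h0 | h0
    · simp [h0]
    · rw [if_neg (by omega)]; exact Nat.mod_eq_of_lt (by omega)
  let f : Fin (n + m) × {w : List Bool // IsDyckPath n m w} → {w : List Bool // IsFreePath n m w} :=
    fun p => ⟨p.2.1.rotate p.1.1, free_rotate p.2.2.1 p.1.1⟩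
  have hbij : Function.Bijective f := by
    constructor
    · rintro ⟨k₁, w₁, hd₁⟩ ⟨k₂, w₂, hd₂⟩ hfe
      simp only [f, Subtype.mk.injEq] at hfe
      set v := w₁.rotate (k₁ : ℕ) with hv
      have hvf : IsFreePath n m v := free_rotate hd₁.1 _
      have hlv : v.length = n + m := length_free hvf
      have hl1 : w₁.length = n + m := length_free hd₁.1
      have hl2 : w₂.length = n + m := length_free hd₂.1
      have hw1 : v.rotate ((n + m - (k₁ : ℕ)) % (n + m)) = w₁ := by
        rw [rotate_mod' hlv, hv, List.rotate_rotate]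
        have he : (k₁ : ℕ) + (n + m - (k₁ : ℕ)) = n + m := by omega
        rw [he, rotate_len' hl1]
      have hw2 : v.rotate ((n + m - (k₂ : ℕ)) % (n + m)) = w₂ := by
        rw [rotate_mod' hlv, hfe, List.rotate_rotate]
        have he : (k₂ : ℕ) + (n + m - (k₂ : ℕ)) = n + m := by omega
        rw [he, rotate_len' hl2]
      have hkeq := unique_rot hn hm h hvf
        (Nat.mod_lt _ hL) (Nat.mod_lt _ hL)
        (by rw [hw1]; exact hd₁) (by rw [hw2]; exact hd₂)
      rw [hm1 _ k₁.2, hm1 _ k₂.2] at hkeq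
      have hk12 : (k₁ : ℕ) = (k₂ : ℕ) := by
        have hb1 := k₁.2; have hb2 := k₂.2
        split_ifs at hkeq <;> omega
      have hw12 : w₁ = w₂ := by rw [← hw1, ← hw2, hk12]
      simp only [Prod.mk.injEq, Subtype.mk.injEq]
      exact ⟨Fin.ext hk12, hw12⟩
    · rintro ⟨v, hvf⟩
      obtain ⟨k, hk, hdk⟩ := exists_rot hn hm hvf
      have hlv : v.length = n + m := length_free hvf
      have hld : (v.rotate k).length = n + m := length_free (free_rotate hvf k)
      refine ⟨⟨⟨(n + m - k) % (n + m), Nat.mod_lt _ hL⟩, ⟨v.rotate k, hdk⟩⟩, ?_⟩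
      apply Subtype.ext
      show (v.rotate k).rotate ((n + m - k) % (n + m)) = v
      rw [rotate_mod' hld, List.rotate_rotate]
      have he : k + (n + m - k) = n + m := by omega
      rw [he, rotate_len' hlv]
  have hcard := Nat.card_congr (Equiv.ofBijective f hbij)
  rw [← hcard, Nat.card_prod, Nat.card_eq_fintype_card (α := Fin (n + m)), Fintype.card_fin]
  congr 1

lemma card_filter_get' {L : ℕ} (w : List Bool) (hl : w.length = L) (b : Bool) :
    (Finset.univ.filter fun i : Fin L => w.get (Fin.cast hl.symm i) = b).card = w.count b := by
  subst hl
  simpa using card_filter_get w b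

lemma card_free (n m : ℕ) :
    Nat.card {w : List Bool // IsFreePath n m w} = (n + m).choose m := by
  let g : {w : List Bool // IsFreePath n m w} → {s : Finset (Fin (n + m)) // s.card = m} :=
    fun p => ⟨Finset.univ.filter
        (fun i => p.1.get (Fin.cast (length_free p.2).symm i) = true), by
      rw [card_filter_get' p.1 (length_free p.2) true]; exact p.2.1⟩
  have hbij : Function.Bijective g := by
    constructor
    · rintro ⟨w₁, h₁⟩ ⟨w₂, h₂⟩ hge
      simp only [g, Subtype.mk.injEq] at hge
      apply Subtype.ext
      show w₁ = w₂
      apply List.ext_get (by rw [length_free h₁, length_free h₂])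
      intro i hi1 hi2
      have hiL : i < n + m := by rw [← length_free h₁]; exact hi1
      have hmem := Finset.ext_iff.mp hge ⟨i, hiL⟩
      simp only [Finset.mem_filter, Finset.mem_univ, true_and] at hmem
      have hmem' : (w₁.get ⟨i, hi1⟩ = true) ↔ (w₂.get ⟨i, hi2⟩ = true) := hmem
      cases hb1 : w₁.get ⟨i, hi1⟩ <;> cases hb2 : w₂.get ⟨i, hi2⟩ <;> simp_all
    · rintro ⟨s, hs⟩
      set w : List Bool := List.ofFn (fun i : Fin (n + m) => decide (i ∈ s)) with hw
      have hl : w.length = n + m := by simp [hw]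
      have hget : ∀ i : Fin (n + m), w.get (Fin.cast hl.symm i) = decide (i ∈ s) := by
        intro i
        show (List.ofFn (fun i : Fin (n + m) => decide (i ∈ s))).get _ = _
        rw [List.get_ofFn]
        exact congrArg (fun j : Fin (n + m) => decide (j ∈ s)) (Fin.ext rfl)
      have hfilter : (Finset.univ.filter fun i : Fin (n + m) =>
          w.get (Fin.cast hl.symm i) = true) = s := by
        ext i
        simp only [Finset.mem_filter, Finset.mem_univ, true_and, hget i]
        simp
      have hct : w.count true = m := by
        rw [← card_filter_get' w hl true, hfilter, hs]
      have hcf : w.count false = n := by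
        have := count_add_count w
        omega
      refine ⟨⟨w, hct, hcf⟩, ?_⟩
      apply Subtype.ext
      show (Finset.univ.filter fun i : Fin (n + m) =>
          w.get (Fin.cast (length_free ⟨hct, hcf⟩).symm i) = true) = s
      convert hfilter using 2
  rw [Nat.card_congr (Equiv.ofBijective g hbij), Nat.card_eq_fintype_card,
    Fintype.card_finset_len, Fintype.card_fin]

/-- If `gcd(n,m) = 1`, the number of `(n,m)`-Dyck paths is `(1/(n+m))·C(n+m, n)`:
`(n+m)` times the number of `(n,m)`-Dyck paths equals `C(n+m, n)`. -/
theorem stmt8 (n m : ℕ) (hn : 0 < n) (hm : 0 < m) (h : Nat.gcd n m = 1) :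
    (n + m) * {w : List Bool | IsDyckPath n m w}.ncard = (n + m).choose n := by
  rw [← card_free_eq hn hm h, card_free]
  rw [← Nat.choose_symm (by omega : n ≤ n + m)]
  congr 1
  omega
end

section
/- Let k and n be positive integers. The number of (n, kn)-Dyck paths equals the number of (n, kn+1)-Dyck paths. -/
lemma arith_key (k n u d : ℕ) (hn : 0 < n) (hd : d ≤ n)
    (h : (k * n + 1) * d ≤ n * (u + 1)) : k * n * d ≤ n * u := by
  rcases Nat.eq_zero_or_pos d with h0 | h0
  · simp [h0]
  · have hku : k * d ≤ u := by
      by_contra hlt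
      push_neg at hlt
      have h2 : n * (u + 1) ≤ n * (k * d) := Nat.mul_le_mul_left n hlt
      nlinarith
    calc k * n * d = n * (k * d) := by ring
      _ ≤ n * u := Nat.mul_le_mul_left n hku

/-- The number of `(n, kn)`-Dyck paths equals the number of `(n, kn+1)`-Dyck paths. -/
theorem stmt13 (k n : ℕ) (hk : 0 < k) (hn : 0 < n) :
    {w : List Bool | IsDyckPath n (k * n) w}.ncard =
      {w : List Bool | IsDyckPath n (k * n + 1) w}.ncard := by
  have key : {w : List Bool | IsDyckPath n (k * n + 1) w}
      = (fun w => true :: w) '' {w : List Bool | IsDyckPath n (k * n) w} := by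
    ext w
    simp only [Set.mem_image, Set.mem_setOf_eq]
    constructor
    · rintro ⟨⟨hu, hd⟩, hpre⟩
      match w with
      | [] => simp at hu
      | false :: t =>
          exfalso
          have h1 := hpre [false] ⟨t, rfl⟩
          simp at h1
      | true :: t =>
          simp [List.count_cons] at hu hd
          refine ⟨t, ⟨⟨by omega, by omega⟩, ?_⟩, rfl⟩
          intro p hp
          have hdn : p.count false ≤ n := by
            have := hp.sublist.count_le false
            omega
          have h2 := hpre (true :: p) (List.cons_prefix_cons.mpr ⟨rfl, hp⟩)
          simp [List.count_cons] at h2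
          have := arith_key k n (p.count true) (p.count false) hn hdn (by omega)
          exact this
    · rintro ⟨t, ⟨⟨hu, hd⟩, hpre⟩, rfl⟩
      refine ⟨⟨by simp [List.count_cons, hu], by simpa [List.count_cons] using hd⟩, ?_⟩
      intro p hp
      match p with
      | [] => simp
      | b :: q =>
          obtain ⟨rfl, hq⟩ := List.cons_prefix_cons.mp hp
          have h1 := hpre q hq
          have hdn : q.count false ≤ n := by
            have := hq.sublist.count_le false
            omega
          have hg : (k * n + 1) * q.count false ≤ n * (q.count true + 1) := by nlinarith
          simpa [List.count_cons] using hg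
  rw [key, Set.ncard_image_of_injective _ (fun a b h => by injection h)]
end

section
/- Let k and n be positive integers. The number of k-ary paths of order (k+1)n equals (1/(kn+1))·binomial((k+1)n, n); equivalently, (kn+1) times the number of k-ary paths of order (k+1)n equals binomial((k+1)n, n). -/
/-!
Appending a final `D` to a `k`-ary path gives a word with `n` letters `U` and `kn + 1` letters
`D`, hence of total height `-1`, all of whose proper prefixes have nonnegative height; conversely
every such word arises this way. By the cycle lemma, a word of height `-1` has exactly one rotation
with this property: the one starting at the first minimum of its prefix heights. So
`(p, i) ↦ rotate (p ++ [D]) i` is a bijection from paths × `Fin ((k+1)n + 1)` onto all words with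
`n` letters `U` and `kn + 1` letters `D`, i.e. `((k+1)n + 1) · #paths = C((k+1)n + 1, n)`, and
`C((k+1)n + 1, n) · (kn + 1) = C((k+1)n, n) · ((k+1)n + 1)`.
-/

/-- A `k`-ary path of order `(k+1)n`: a word over `{U, D}` (here `true` = `U`, with
displacement `(1,k)`, and `false` = `D`, with displacement `(1,−1)`) with exactly `n`
letters `U` and `kn` letters `D`, such that every partial sum has nonnegative
`y`-coordinate (the path then automatically ends at `((k+1)n, 0)`). -/
def IsKaryPath (k n : ℕ) (w : List Bool) : Prop :=
  w.count true = n ∧ w.count false = k * n ∧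
    ∀ p : List Bool, p <+: w → (p.count false : ℤ) ≤ (k : ℤ) * p.count true

namespace KaryPath

def wordsWithCounts (a b : ℕ) : Set (List Bool) :=
  {w | w.count true = a ∧ w.count false = b}

section Counting

variable {a b : ℕ} {w : List Bool}

theorem length_of_mem_wordsWithCounts (hw : w ∈ wordsWithCounts a b) : w.length = a + b := by
  rw [← List.count_true_add_count_false, hw.1, hw.2]

theorem rotate_mem_wordsWithCounts (hw : w ∈ wordsWithCounts a b) (j : ℕ) :
    w.rotate j ∈ wordsWithCounts a b := by
  simpa only [wordsWithCounts, Set.mem_ofPred_eq, (w.rotate_perm j).count_eq] using hw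

theorem wordsWithCounts_finite (a b : ℕ) : (wordsWithCounts a b).Finite :=
  (List.finite_length_eq Bool (a + b)).subset fun _ hw => length_of_mem_wordsWithCounts hw

theorem wordsWithCounts_zero_left (b : ℕ) : wordsWithCounts 0 b = {List.replicate b false} := by
  ext w
  rw [Set.mem_singleton_iff, List.eq_replicate_iff, ← List.count_true_add_count_false w]
  grind [wordsWithCounts, List.count_eq_zero]

theorem wordsWithCounts_zero_right (a : ℕ) : wordsWithCounts a 0 = {List.replicate a true} := by
  ext w
  rw [Set.mem_singleton_iff, List.eq_replicate_iff, ← List.count_true_add_count_false w]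
  grind [wordsWithCounts, List.count_eq_zero]

theorem wordsWithCounts_succ_succ (a b : ℕ) :
    wordsWithCounts (a + 1) (b + 1) = List.cons true '' wordsWithCounts a (b + 1) ∪
      List.cons false '' wordsWithCounts (a + 1) b := by
  ext (_ | ⟨_ | _, w⟩) <;> simp [wordsWithCounts]

theorem ncard_wordsWithCounts (a b : ℕ) : (wordsWithCounts a b).ncard = (a + b).choose a := by
  induction a generalizing b with
  | zero => simp [wordsWithCounts_zero_left]
  | succ a iha =>
    induction b with
    | zero => simp [wordsWithCounts_zero_right]
    | succ b ihb =>
      have hdisj : Disjoint (List.cons true '' wordsWithCounts a (b + 1))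
          (List.cons false '' wordsWithCounts (a + 1) b) := by
        simp [Set.disjoint_left]
      rw [wordsWithCounts_succ_succ, Set.ncard_union_eq hdisj
        ((wordsWithCounts_finite _ _).image _) ((wordsWithCounts_finite _ _).image _),
        Set.ncard_image_of_injective _ List.cons_injective,
        Set.ncard_image_of_injective _ List.cons_injective, iha, ihb,
        show a + 1 + (b + 1) = a + (b + 1) + 1 by omega, Nat.choose_succ_succ]
      congr 2
      omega

end Counting

section FirstMin

variable {β : Type*} [LinearOrder β]

def IsFirstMinOn (f : ℕ → β) (N j : ℕ) : Prop :=
  j < N ∧ (∀ i < N, f j ≤ f i) ∧ ∀ i < j, f j < f i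

theorem existsUnique_isFirstMinOn (f : ℕ → β) {N : ℕ} (hN : 0 < N) :
    ∃! j, IsFirstMinOn f N j := by
  classical
  have hmin : ∃ j, j < N ∧ ∀ i < N, f j ≤ f i := by
    obtain ⟨j, hj, hjmin⟩ := (Finset.range N).exists_min_image f ⟨0, Finset.mem_range.2 hN⟩
    exact ⟨j, Finset.mem_range.1 hj, fun i hi => hjmin i (Finset.mem_range.2 hi)⟩
  obtain ⟨hjN, hjmin⟩ := Nat.find_spec hmin
  refine ⟨Nat.find hmin, ⟨hjN, hjmin, fun i hi => ?_⟩, ?_⟩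
  · have hiN := hi.trans hjN
    refine (hjmin i hiN).lt_of_ne fun h => Nat.find_min hmin hi ⟨hiN, ?_⟩
    exact h ▸ hjmin
  · rintro j ⟨hjN', hjmin', hjstrict'⟩
    exact le_antisymm (not_lt.1 fun h => (hjmin _ hjN').not_gt (hjstrict' _ h))
      (Nat.find_min' hmin ⟨hjN', hjmin'⟩)

end FirstMin

variable (k : ℕ)

def height (w : List Bool) : ℤ := k * w.count true - w.count false

def ProperPrefixesNonneg (w : List Bool) : Prop :=
  ∀ t < w.length, 0 ≤ height k (w.take t)

variable {k}

theorem height_append (u v : List Bool) : height k (u ++ v) = height k u + height k v := by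
  simp only [height, List.count_append]
  push_cast
  ring

theorem _root_.List.take_rotate {α : Type*} (w : List α) {j t : ℕ} (hj : j ≤ w.length)
    (ht : t ≤ w.length) :
    (w.rotate j).take t = ((w ++ w).drop j).take t := by
  rw [List.rotate_eq_drop_append_take hj, List.drop_append,
    Nat.sub_eq_zero_of_le hj, List.drop_zero, List.take_append,
    List.take_append, List.take_take]
  congr 1
  have : min (t - (w.drop j).length) j = t - (w.drop j).length := by
    simp [List.length_drop]; omega
  rw [this]

theorem height_take_rotate {w : List Bool} {j t : ℕ} (hj : j ≤ w.length) (ht : t ≤ w.length) :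
    height k ((w.rotate j).take t) =
      height k ((w ++ w).take (j + t)) - height k ((w ++ w).take j) := by
  rw [List.take_rotate w hj ht, List.take_add, height_append]
  ring

theorem height_take_length_add {w : List Bool} {i : ℕ} (hi : i ≤ w.length) :
    height k ((w ++ w).take (w.length + i)) = height k w + height k ((w ++ w).take i) := by
  rw [List.take_add, List.take_left' rfl, List.drop_left' rfl,
    List.take_append_of_le_length hi, height_append]

theorem properPrefixesNonneg_rotate_iff {w : List Bool} (hw : height k w = -1) {j : ℕ}
    (hj : j < w.length) :
    ProperPrefixesNonneg k (w.rotate j) ↔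
      IsFirstMinOn (fun i => height k ((w ++ w).take i)) w.length j := by
  set S := fun i => height k ((w ++ w).take i)
  have hS : ∀ i ≤ w.length, S (w.length + i) = S i - 1 := fun i hi => by
    simp only [S, height_take_length_add hi, hw]
    ring
  have hrot : ∀ t ≤ w.length, height k ((w.rotate j).take t) = S (j + t) - S j :=
    fun t ht => height_take_rotate hj.le ht
  rw [ProperPrefixesNonneg, List.length_rotate]
  constructor
  · intro h
    have hstrict : ∀ i < j, S j < S i := fun i hi => by
      have := h (w.length + i - j) (by omega)
      rw [hrot _ (by omega), show j + (w.length + i - j) = w.length + i by omega,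
        hS i (by omega)] at this
      linarith
    refine ⟨hj, fun i hi => ?_, hstrict⟩
    rcases lt_or_ge i j with hij | hji
    · exact (hstrict i hij).le
    · have := h (i - j) (by omega)
      rwa [hrot _ (by omega), Nat.add_sub_cancel' hji, sub_nonneg] at this
  · rintro ⟨-, hmin, hstrict⟩ t ht
    rw [hrot t ht.le, sub_nonneg]
    rcases lt_or_ge (j + t) w.length with h | h
    · exact hmin _ h
    · rw [show j + t = w.length + (j + t - w.length) by omega, hS _ (by omega)]
      linarith [hstrict (j + t - w.length) (by omega)]

/-- Raney's cycle lemma. -/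
theorem existsUnique_rotate_properPrefixesNonneg {w : List Bool} (hw : height k w = -1) :
    ∃! j, j < w.length ∧ ProperPrefixesNonneg k (w.rotate j) := by
  have hpos : 0 < w.length := List.length_pos_iff.2 (by rintro rfl; simp [height] at hw)
  obtain ⟨j, hj, huniq⟩ := existsUnique_isFirstMinOn (fun i => height k ((w ++ w).take i)) hpos
  refine ⟨j, ⟨hj.1, (properPrefixesNonneg_rotate_iff hw hj.1).2 hj⟩, ?_⟩
  rintro j' ⟨hj', hgood⟩
  exact huniq j' ((properPrefixesNonneg_rotate_iff hw hj').1 hgood)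

section Paths

variable {n : ℕ} {p : List Bool}

theorem height_of_mem_wordsWithCounts {w : List Bool} (hw : w ∈ wordsWithCounts n (k * n + 1)) :
    height k w = -1 := by
  rw [height, hw.1, hw.2]
  push_cast
  ring

theorem _root_.IsKaryPath.append_false_mem (hp : IsKaryPath k n p) :
    p ++ [false] ∈ wordsWithCounts n (k * n + 1) := by
  simp [wordsWithCounts, List.count_append, hp.1, hp.2.1]

theorem _root_.IsKaryPath.properPrefixesNonneg_append_false (hp : IsKaryPath k n p) :
    ProperPrefixesNonneg k (p ++ [false]) := by
  intro t ht
  rw [List.length_append, List.length_singleton, Nat.lt_succ_iff] at ht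
  rw [List.take_append_of_le_length ht, height, sub_nonneg]
  exact hp.2.2 _ (List.take_prefix t p)

theorem exists_isKaryPath_of_properPrefixesNonneg {v : List Bool}
    (hv : v ∈ wordsWithCounts n (k * n + 1)) (hg : ProperPrefixesNonneg k v) :
    ∃ p, IsKaryPath k n p ∧ v = p ++ [false] := by
  have hheight := height_of_mem_wordsWithCounts hv
  obtain rfl | ⟨p, x, rfl⟩ := v.eq_nil_or_concat'
  · simp [height] at hheight
  have hprefix : ∀ q, q <+: p → 0 ≤ height k q := fun q hq => by
    have := hg q.length (by simpa using Nat.lt_succ_of_le hq.length_le)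
    rwa [List.take_append_of_le_length hq.length_le, ← List.prefix_iff_eq_take.1 hq] at this
  obtain rfl : x = false := by
    cases x
    · rfl
    · have hp_nonneg := hprefix p (List.prefix_refl p)
      have htrue : height k [true] = k := by simp [height]
      rw [height_append, htrue] at hheight
      omega
  obtain ⟨htrue, hfalse⟩ := hv
  refine ⟨p, ⟨by simpa using htrue, by simpa using hfalse, fun q hq => ?_⟩, rfl⟩
  simpa [height] using hprefix q hq

theorem _root_.List.rotate_rotate_neg {α : Type*} {m : ℕ} (u : List α) (hu : u.length = m + 1)
    (i : Fin (m + 1)) : (u.rotate i).rotate ↑(-i) = u := by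
  rw [List.rotate_rotate, ← List.rotate_mod, hu, ← Fin.val_add, add_neg_cancel, Fin.val_zero,
    List.rotate_zero]

variable (k n)

def rotateAppendFalse :
    {p // IsKaryPath k n p} × Fin (n + k * n + 1) → wordsWithCounts n (k * n + 1) :=
  fun x => ⟨(x.1.1 ++ [false]).rotate x.2,
    rotate_mem_wordsWithCounts x.1.2.append_false_mem _⟩

theorem bijective_rotateAppendFalse : Function.Bijective (rotateAppendFalse k n) := by
  have hlen : ∀ w ∈ wordsWithCounts n (k * n + 1), w.length = n + k * n + 1 := fun w hw => by
    rw [length_of_mem_wordsWithCounts hw, add_assoc]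
  constructor
  · rintro ⟨⟨p, hp⟩, i⟩ ⟨⟨q, hq⟩, j⟩ h
    have hw : (p ++ [false]).rotate i = (q ++ [false]).rotate j := congrArg Subtype.val h
    have hpw := List.rotate_rotate_neg _ (hlen _ hp.append_false_mem) i
    have hqw := List.rotate_rotate_neg _ (hlen _ hq.append_false_mem) j
    rw [← hw] at hqw
    set w := (p ++ [false]).rotate i
    have hmem : w ∈ wordsWithCounts n (k * n + 1) :=
      rotate_mem_wordsWithCounts hp.append_false_mem i
    have hij : ((-i : Fin _) : ℕ) = ((-j : Fin _) : ℕ) :=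
      (existsUnique_rotate_properPrefixesNonneg (height_of_mem_wordsWithCounts hmem)).unique
        ⟨(-i).isLt.trans_eq (hlen w hmem).symm, hpw ▸ hp.properPrefixesNonneg_append_false⟩
        ⟨(-j).isLt.trans_eq (hlen w hmem).symm, hqw ▸ hq.properPrefixesNonneg_append_false⟩
    obtain rfl : i = j := neg_injective (Fin.ext hij)
    obtain rfl : p = q := (List.append_left_inj _).1 (hpw.symm.trans hqw)
    rfl
  · rintro ⟨w, hw⟩
    obtain ⟨j, ⟨hj, hgood⟩, -⟩ :=
      existsUnique_rotate_properPrefixesNonneg (height_of_mem_wordsWithCounts hw)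
    obtain ⟨p, hp, hpw⟩ :=
      exists_isKaryPath_of_properPrefixesNonneg (rotate_mem_wordsWithCounts hw j) hgood
    let j' : Fin (n + k * n + 1) := ⟨j, hlen w hw ▸ hj⟩
    refine ⟨(⟨p, hp⟩, -j'), Subtype.ext ?_⟩
    change (p ++ [false]).rotate ↑(-j') = w
    rw [← hpw]
    exact List.rotate_rotate_neg w (hlen w hw) j'

theorem ncard_isKaryPath_mul :
    {p | IsKaryPath k n p}.ncard * ((k + 1) * n + 1) = ((k + 1) * n + 1).choose n := by
  have hcard := Nat.card_congr (Equiv.ofBijective _ (bijective_rotateAppendFalse k n))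
  rw [Nat.card_prod, Nat.card_eq_fintype_card (α := Fin _), Fintype.card_fin, ← Set.coe_ofPred,
    Nat.card_coe_set_eq, Nat.card_coe_set_eq, ncard_wordsWithCounts] at hcard
  convert hcard using 2 <;> ring

end Paths

end KaryPath

theorem stmt15_general (k n : ℕ) :
    (k * n + 1) * {w : List Bool | IsKaryPath k n w}.ncard =
      ((k + 1) * n).choose n := by
  have hpascal := Nat.choose_mul_succ_eq ((k + 1) * n) n
  rw [show (k + 1) * n + 1 - n = k * n + 1 from Nat.sub_eq_of_eq_add (by ring)] at hpascal
  apply Nat.eq_of_mul_eq_mul_right ((k + 1) * n).succ_pos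
  rw [mul_assoc, KaryPath.ncard_isKaryPath_mul, hpascal, mul_comm]

/-- The number of `k`-ary paths of order `(k+1)n` is `(1/(kn+1))·C((k+1)n, n)`:
`(kn+1)` times this number equals `C((k+1)n, n)`. -/
theorem stmt15 (k n : ℕ) (hk : 0 < k) (hn : 0 < n) :
    (k * n + 1) * {w : List Bool | IsKaryPath k n w}.ncard =
      ((k + 1) * n).choose n :=
  stmt15_general k n
end
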